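/- arXiv:1603.09280 — 5 statements merged into one kernel-verified Lean document; each statement's English description precedes it below -/
import Mathlib

section
/- If (H, R) is a quasi-triangular bialgebra and F is a normalized cocycle twist on H, then R^F := F₂₁ R F⁻¹ is a universal R-matrix for the twisted bialgebra H^F with coproduct ΔF = FΔF⁻¹; that is, R^F ΔF(x) (R^F)⁻¹ = ΔF^op(x), (ΔF⊗id)(R^F) = R^F₁₃ R^F₂₃, (id⊗ΔF)(R^F) = R^F₁₃ R^F₁₂, and (ε⊗id)(R^F) = (id⊗ε)(R^F) = 1. -/
open TensorProduct

/-- Embedding of `H ⊗ H` into the first and second factors of `H ⊗ H ⊗ H`. -/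
noncomputable def leg12 (K H : Type) [CommRing K] [Ring H] [Algebra K H] :
    H ⊗[K] H →ₐ[K] H ⊗[K] (H ⊗[K] H) :=
  Algebra.TensorProduct.map (AlgHom.id K H) Algebra.TensorProduct.includeLeft

/-- Embedding of `H ⊗ H` into the second and third factors of `H ⊗ H ⊗ H`. -/
noncomputable def leg23 (K H : Type) [CommRing K] [Ring H] [Algebra K H] :
    H ⊗[K] H →ₐ[K] H ⊗[K] (H ⊗[K] H) :=
  Algebra.TensorProduct.includeRight

/-- Embedding of `H ⊗ H` into the first and third factors of `H ⊗ H ⊗ H`. -/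
noncomputable def leg13 (K H : Type) [CommRing K] [Ring H] [Algebra K H] :
    H ⊗[K] H →ₐ[K] H ⊗[K] (H ⊗[K] H) :=
  Algebra.TensorProduct.map (AlgHom.id K H) Algebra.TensorProduct.includeRight

/-- `Δ ⊗ id` as a map `H ⊗ H → H ⊗ (H ⊗ H)`. -/
noncomputable def copL (K H : Type) [CommRing K] [Ring H] [Bialgebra K H] :
    H ⊗[K] H →ₗ[K] H ⊗[K] (H ⊗[K] H) :=
  (TensorProduct.assoc K H H H).toLinearMap ∘ₗ
    TensorProduct.map Coalgebra.comul LinearMap.id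

/-- `id ⊗ Δ` as a map `H ⊗ H → H ⊗ (H ⊗ H)`. -/
noncomputable def copR (K H : Type) [CommRing K] [Ring H] [Bialgebra K H] :
    H ⊗[K] H →ₗ[K] H ⊗[K] (H ⊗[K] H) :=
  TensorProduct.map LinearMap.id Coalgebra.comul

/-- `ε ⊗ id : H ⊗ H → H`. -/
noncomputable def ctL (K H : Type) [CommRing K] [Ring H] [Bialgebra K H] :
    H ⊗[K] H →ₗ[K] H :=
  (TensorProduct.lid K H).toLinearMap ∘ₗ TensorProduct.map Coalgebra.counit LinearMap.id

/-- `id ⊗ ε : H ⊗ H → H`. -/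
noncomputable def ctR (K H : Type) [CommRing K] [Ring H] [Bialgebra K H] :
    H ⊗[K] H →ₗ[K] H :=
  (TensorProduct.rid K H).toLinearMap ∘ₗ TensorProduct.map LinearMap.id Coalgebra.counit
/-- The twisted coproduct `Δ_F(x) = F · Δ(x) · F⁻¹` as a linear map. -/
noncomputable def twComul {K H : Type} [CommRing K] [Ring H] [Bialgebra K H]
    (F Finv : H ⊗[K] H) : H →ₗ[K] H ⊗[K] H :=
  LinearMap.mulLeft K F ∘ₗ LinearMap.mulRight K Finv ∘ₗ Coalgebra.comul

namespace TwAux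

variable (K H : Type) [CommRing K] [Ring H] [Bialgebra K H]

/-- flip on `H ⊗ H` as an algebra equivalence. -/
noncomputable def τ : H ⊗[K] H ≃ₐ[K] H ⊗[K] H := Algebra.TensorProduct.comm K H H

/-- associator as algebra equivalence. -/
noncomputable def asc : (H ⊗[K] H) ⊗[K] H ≃ₐ[K] H ⊗[K] (H ⊗[K] H) :=
  Algebra.TensorProduct.assoc K K K H H H

/-- comultiplication as algebra hom. -/
noncomputable def Δa : H →ₐ[K] H ⊗[K] H := Bialgebra.comulAlgHom K H

/-- opposite comultiplication as algebra hom. -/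
noncomputable def Δ' : H →ₐ[K] H ⊗[K] H := (τ K H).toAlgHom.comp (Δa K H)

/-- `Δ ⊗ id` as algebra hom. -/
noncomputable def D1 : H ⊗[K] H →ₐ[K] H ⊗[K] (H ⊗[K] H) :=
  (asc K H).toAlgHom.comp (Algebra.TensorProduct.map (Δa K H) (AlgHom.id K H))

/-- `Δᵒᵖ ⊗ id` as algebra hom. -/
noncomputable def D1' : H ⊗[K] H →ₐ[K] H ⊗[K] (H ⊗[K] H) :=
  (asc K H).toAlgHom.comp (Algebra.TensorProduct.map (Δ' K H) (AlgHom.id K H))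

/-- `id ⊗ Δ` as algebra hom. -/
noncomputable def D2 : H ⊗[K] H →ₐ[K] H ⊗[K] (H ⊗[K] H) :=
  Algebra.TensorProduct.map (AlgHom.id K H) (Δa K H)

/-- `id ⊗ Δᵒᵖ` as algebra hom. -/
noncomputable def D2' : H ⊗[K] H →ₐ[K] H ⊗[K] (H ⊗[K] H) :=
  Algebra.TensorProduct.map (AlgHom.id K H) (Δ' K H)

/-- swap of legs 2,3. -/
noncomputable def p23 : H ⊗[K] (H ⊗[K] H) ≃ₐ[K] H ⊗[K] (H ⊗[K] H) :=
  Algebra.TensorProduct.congr AlgEquiv.refl (τ K H)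

/-- swap of legs 1,2. -/
noncomputable def p12 : H ⊗[K] (H ⊗[K] H) ≃ₐ[K] H ⊗[K] (H ⊗[K] H) :=
  (asc K H).symm.trans ((Algebra.TensorProduct.congr (τ K H) AlgEquiv.refl).trans (asc K H))

/-- `Δ` into legs 1,3. -/
noncomputable def D13 : H ⊗[K] H →ₐ[K] H ⊗[K] (H ⊗[K] H) :=
  (p23 K H).toAlgHom.comp (D1 K H)

/-- `Δᵒᵖ` into legs 1,3. -/
noncomputable def D13' : H ⊗[K] H →ₐ[K] H ⊗[K] (H ⊗[K] H) :=
  (p23 K H).toAlgHom.comp (D1' K H)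

variable {K H}

lemma τ_tmul (x y : H) : τ K H (x ⊗ₜ y) = y ⊗ₜ x := rfl

lemma ττ (u : H ⊗[K] H) : τ K H (τ K H u) = u := by
  induction u using TensorProduct.induction_on with
  | zero => simp
  | tmul x y => rfl
  | add a b ha hb => simp only [map_add, ha, hb]

lemma p23_tmul (x : H) (v : H ⊗[K] H) : p23 K H (x ⊗ₜ v) = x ⊗ₜ τ K H v := by
  simp [p23]

lemma p12_tmul3 (x y z : H) : p12 K H (x ⊗ₜ (y ⊗ₜ z)) = y ⊗ₜ (x ⊗ₜ z) := by
  simp [p12, asc, τ]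

lemma leg12_tmul (x y : H) : leg12 K H (x ⊗ₜ y) = x ⊗ₜ (y ⊗ₜ (1:H)) := rfl

lemma leg13_tmul (x y : H) : leg13 K H (x ⊗ₜ y) = x ⊗ₜ ((1:H) ⊗ₜ y) := rfl

lemma leg23_apply (u : H ⊗[K] H) : leg23 K H u = (1:H) ⊗ₜ u := rfl

lemma asc_tmul_one (v : H ⊗[K] H) : asc K H (v ⊗ₜ (1:H)) = leg12 K H v := by
  induction v using TensorProduct.induction_on with
  | zero => simp
  | tmul x y => rfl
  | add a b ha hb => simp only [add_tmul, map_add, ha, hb]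

lemma asc_tmul (v : H ⊗[K] H) (z : H) :
    asc K H (v ⊗ₜ z) = leg12 K H v * ((1:H) ⊗ₜ ((1:H) ⊗ₜ z)) := by
  induction v using TensorProduct.induction_on with
  | zero => simp
  | tmul x y => simp [asc, leg12_tmul, Algebra.TensorProduct.tmul_mul_tmul]
  | add a b ha hb => simp only [add_tmul, map_add, ha, hb, add_mul]

lemma D1_tmul (x y : H) :
    D1 K H (x ⊗ₜ y) = leg12 K H (Δa K H x) * ((1:H) ⊗ₜ ((1:H) ⊗ₜ y)) := by
  rw [D1]
  simp only [AlgHom.coe_comp, Function.comp_apply, Algebra.TensorProduct.map_tmul,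
    AlgHom.coe_id, id_eq, AlgEquiv.toAlgHom_eq_coe, AlgHom.coe_coe]
  exact asc_tmul _ _

lemma D1'_tmul (x y : H) :
    D1' K H (x ⊗ₜ y) = leg12 K H (Δ' K H x) * ((1:H) ⊗ₜ ((1:H) ⊗ₜ y)) := by
  rw [D1']
  simp only [AlgHom.coe_comp, Function.comp_apply, Algebra.TensorProduct.map_tmul,
    AlgHom.coe_id, id_eq, AlgEquiv.toAlgHom_eq_coe, AlgHom.coe_coe]
  exact asc_tmul _ _

lemma D2_tmul (x y : H) : D2 K H (x ⊗ₜ y) = x ⊗ₜ Δa K H y := rfl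

lemma D2'_tmul (x y : H) : D2' K H (x ⊗ₜ y) = x ⊗ₜ Δ' K H y := rfl

-- commutation of a leg-2 element with a legs-1,3 element
lemma leg2_comm (v : H ⊗[K] H) (x : H) :
    ((1:H) ⊗ₜ (x ⊗ₜ (1:H))) * leg13 K H v = leg13 K H v * ((1:H) ⊗ₜ (x ⊗ₜ (1:H))) := by
  induction v using TensorProduct.induction_on with
  | zero => simp
  | tmul a b =>
      rw [leg13_tmul, Algebra.TensorProduct.tmul_mul_tmul,
        Algebra.TensorProduct.tmul_mul_tmul, Algebra.TensorProduct.tmul_mul_tmul,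
        Algebra.TensorProduct.tmul_mul_tmul]
      simp
  | add a b ha hb => simp only [map_add, add_mul, mul_add, ha, hb]

-- commutation of a leg-3 element with a legs-1,2 element
lemma leg3_comm (v : H ⊗[K] H) (y : H) :
    ((1:H) ⊗ₜ ((1:H) ⊗ₜ y)) * leg12 K H v = leg12 K H v * ((1:H) ⊗ₜ ((1:H) ⊗ₜ y)) := by
  induction v using TensorProduct.induction_on with
  | zero => simp
  | tmul a b =>
      rw [leg12_tmul, Algebra.TensorProduct.tmul_mul_tmul,
        Algebra.TensorProduct.tmul_mul_tmul, Algebra.TensorProduct.tmul_mul_tmul,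
        Algebra.TensorProduct.tmul_mul_tmul]
      simp
  | add a b ha hb => simp only [map_add, add_mul, mul_add, ha, hb]


lemma p23_D1 (u : H ⊗[K] H) : p23 K H (D1 K H u) = D13 K H u := rfl
lemma p23_D1' (u : H ⊗[K] H) : p23 K H (D1' K H u) = D13' K H u := rfl

-- transports
lemma p23_leg12 (u : H ⊗[K] H) : p23 K H (leg12 K H u) = leg13 K H u := by
  induction u using TensorProduct.induction_on with
  | zero => simp
  | tmul x y => rw [leg12_tmul, p23_tmul, τ_tmul, leg13_tmul]
  | add a b ha hb => simp only [map_add, ha, hb]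

lemma p23_leg23 (u : H ⊗[K] H) : p23 K H (leg23 K H u) = leg23 K H (τ K H u) := by
  rw [leg23_apply, p23_tmul, leg23_apply]

lemma p23_leg13 (u : H ⊗[K] H) : p23 K H (leg13 K H u) = leg12 K H u := by
  induction u using TensorProduct.induction_on with
  | zero => simp
  | tmul x y => rw [leg13_tmul, p23_tmul, τ_tmul, leg12_tmul]
  | add a b ha hb => simp only [map_add, ha, hb]

lemma p12_leg12 (u : H ⊗[K] H) : p12 K H (leg12 K H u) = leg12 K H (τ K H u) := by
  induction u using TensorProduct.induction_on with
  | zero => simp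
  | tmul x y => rw [leg12_tmul, p12_tmul3, τ_tmul, leg12_tmul]
  | add a b ha hb => simp only [map_add, ha, hb]

lemma p12_leg23 (u : H ⊗[K] H) : p12 K H (leg23 K H u) = leg13 K H u := by
  induction u using TensorProduct.induction_on with
  | zero => simp
  | tmul x y => rw [leg23_apply, p12_tmul3, leg13_tmul]
  | add a b ha hb => simp only [map_add, ha, hb]

lemma p12_leg13 (u : H ⊗[K] H) : p12 K H (leg13 K H u) = leg23 K H u := by
  induction u using TensorProduct.induction_on with
  | zero => simp
  | tmul x y => rw [leg13_tmul, p12_tmul3, leg23_apply]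
  | add a b ha hb => simp only [map_add, ha, hb]

lemma D13_tmul (x y : H) :
    D13 K H (x ⊗ₜ y) = leg13 K H (Δa K H x) * ((1:H) ⊗ₜ (y ⊗ₜ (1:H))) := by
  rw [← p23_D1, D1_tmul, map_mul, p23_leg12, p23_tmul, τ_tmul]

lemma D13'_tmul (x y : H) :
    D13' K H (x ⊗ₜ y) = leg13 K H (Δ' K H x) * ((1:H) ⊗ₜ (y ⊗ₜ (1:H))) := by
  rw [← p23_D1', D1'_tmul, map_mul, p23_leg12, p23_tmul, τ_tmul]

lemma p23_p23 (z : H ⊗[K] (H ⊗[K] H)) : p23 K H (p23 K H z) = z := by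
  induction z using TensorProduct.induction_on with
  | zero => simp
  | tmul x v => rw [p23_tmul, p23_tmul, ττ]
  | add a b ha hb => simp only [map_add, ha, hb]

lemma p23_D13 (u : H ⊗[K] H) : p23 K H (D13 K H u) = D1 K H u := by
  rw [← p23_D1, p23_p23]

lemma p23_D2 (u : H ⊗[K] H) : p23 K H (D2 K H u) = D2' K H u := by
  induction u using TensorProduct.induction_on with
  | zero => simp
  | tmul x y => rw [D2_tmul, p23_tmul, D2'_tmul, Δ']; rfl
  | add a b ha hb => simp only [map_add, ha, hb]

lemma p12_D1 (u : H ⊗[K] H) : p12 K H (D1 K H u) = D1' K H u := by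
  induction u using TensorProduct.induction_on with
  | zero => simp
  | tmul x y =>
      rw [D1_tmul, map_mul, p12_leg12, p12_tmul3, D1'_tmul, Δ']; rfl
  | add a b ha hb => simp only [map_add, ha, hb]

lemma p12_D2 (u : H ⊗[K] H) : p12 K H (D2 K H u) = D13 K H (τ K H u) := by
  induction u using TensorProduct.induction_on with
  | zero => simp
  | tmul x y =>
      have h1 : D2 K H (x ⊗ₜ y) = (x ⊗ₜ ((1:H) ⊗ₜ (1:H))) * leg23 K H (Δa K H y) := by
        rw [leg23_apply, Algebra.TensorProduct.tmul_mul_tmul, D2_tmul, mul_one, ← Algebra.TensorProduct.one_def, one_mul]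
      rw [h1, map_mul, p12_leg23]
      have h2 : p12 K H (x ⊗ₜ ((1:H) ⊗ₜ (1:H))) = (1:H) ⊗ₜ (x ⊗ₜ (1:H)) := p12_tmul3 x 1 1
      rw [h2, τ_tmul, D13_tmul, leg2_comm]
  | add a b ha hb => simp only [map_add, ha, hb]


lemma p12_D2' (u : H ⊗[K] H) : p12 K H (D2' K H u) = D13' K H (τ K H u) := by
  induction u using TensorProduct.induction_on with
  | zero => simp
  | tmul x y =>
      have h1 : D2' K H (x ⊗ₜ y) = (x ⊗ₜ ((1:H) ⊗ₜ (1:H))) * leg23 K H (Δ' K H y) := by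
        rw [leg23_apply, Algebra.TensorProduct.tmul_mul_tmul, D2'_tmul, mul_one,
          ← Algebra.TensorProduct.one_def, one_mul]
      rw [h1, map_mul, p12_leg23]
      have h2 : p12 K H (x ⊗ₜ ((1:H) ⊗ₜ (1:H))) = (1:H) ⊗ₜ (x ⊗ₜ (1:H)) := p12_tmul3 x 1 1
      rw [h2, τ_tmul, D13'_tmul, leg2_comm]
  | add a b ha hb => simp only [map_add, ha, hb]

lemma p12_D13 (u : H ⊗[K] H) : p12 K H (D13 K H u) = D2 K H (τ K H u) := by
  induction u using TensorProduct.induction_on with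
  | zero => simp
  | tmul x y =>
      rw [D13_tmul, map_mul, p12_leg13, τ_tmul]
      have h2 : p12 K H ((1:H) ⊗ₜ (y ⊗ₜ (1:H))) = y ⊗ₜ ((1:H) ⊗ₜ (1:H)) := p12_tmul3 1 y 1
      rw [h2]
      have h3 : D2 K H (y ⊗ₜ x) = (y ⊗ₜ ((1:H) ⊗ₜ (1:H))) * leg23 K H (Δa K H x) := by
        rw [leg23_apply, Algebra.TensorProduct.tmul_mul_tmul, D2_tmul, mul_one,
          ← Algebra.TensorProduct.one_def, one_mul]
      rw [h3]
      -- leg23 v commutes with y ⊗ₜ 1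
      rw [leg23_apply, Algebra.TensorProduct.tmul_mul_tmul,
        Algebra.TensorProduct.tmul_mul_tmul, mul_one, one_mul,
        ← Algebra.TensorProduct.one_def, mul_one, one_mul]
  | add a b ha hb => simp only [map_add, ha, hb]

-- conversions between linear statement maps and algebra maps
lemma copL_eq (u : H ⊗[K] H) : copL K H u = D1 K H u := by
  induction u using TensorProduct.induction_on with
  | zero => simp
  | tmul x y => rfl
  | add a b ha hb => simp only [map_add, ha, hb]

lemma copR_eq (u : H ⊗[K] H) : copR K H u = D2 K H u := by
  induction u using TensorProduct.induction_on with
  | zero => simp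
  | tmul x y => rfl
  | add a b ha hb => simp only [map_add, ha, hb]

variable (K H)

/-- `ε ⊗ id` as algebra hom. -/
noncomputable def eL : H ⊗[K] H →ₐ[K] H :=
  (Algebra.TensorProduct.lid K H).toAlgHom.comp
    (Algebra.TensorProduct.map (Bialgebra.counitAlgHom K H) (AlgHom.id K H))

/-- `id ⊗ ε` as algebra hom. -/
noncomputable def eR : H ⊗[K] H →ₐ[K] H :=
  (Algebra.TensorProduct.rid K K H).toAlgHom.comp
    (Algebra.TensorProduct.map (AlgHom.id K H) (Bialgebra.counitAlgHom K H))

variable {K H}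

lemma ctL_eq (u : H ⊗[K] H) : ctL K H u = eL K H u := by
  induction u using TensorProduct.induction_on with
  | zero => simp
  | tmul x y => rfl
  | add a b ha hb => simp only [map_add, ha, hb]

lemma ctR_eq (u : H ⊗[K] H) : ctR K H u = eR K H u := by
  induction u using TensorProduct.induction_on with
  | zero => simp
  | tmul x y => rfl
  | add a b ha hb => simp only [map_add, ha, hb]

lemma eL_τ (u : H ⊗[K] H) : eL K H (τ K H u) = eR K H u := by
  induction u using TensorProduct.induction_on with
  | zero => simp
  | tmul x y => rfl
  | add a b ha hb => simp only [map_add, ha, hb]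

lemma eR_τ (u : H ⊗[K] H) : eR K H (τ K H u) = eL K H u := by
  induction u using TensorProduct.induction_on with
  | zero => simp
  | tmul x y => rfl
  | add a b ha hb => simp only [map_add, ha, hb]


section WithData

variable (R F Finv : H ⊗[K] H)

lemma int1 (hkey : ∀ x : H, R * Δa K H x = Δ' K H x * R) (X : H ⊗[K] H) :
    leg12 K H R * D1 K H X = D1' K H X * leg12 K H R := by
  induction X using TensorProduct.induction_on with
  | zero => simp
  | tmul x y =>
      rw [D1_tmul, D1'_tmul, ← mul_assoc, ← map_mul, hkey x, map_mul, mul_assoc,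
        ← leg3_comm, ← mul_assoc]
  | add a b ha hb => simp only [map_add, mul_add, add_mul, ha, hb]

lemma int2 (hkey : ∀ x : H, R * Δa K H x = Δ' K H x * R) (X : H ⊗[K] H) :
    leg23 K H R * D2 K H X = D2' K H X * leg23 K H R := by
  induction X using TensorProduct.induction_on with
  | zero => simp
  | tmul x y =>
      rw [leg23_apply, D2_tmul, D2'_tmul, Algebra.TensorProduct.tmul_mul_tmul,
        Algebra.TensorProduct.tmul_mul_tmul, one_mul, mul_one, hkey y]
  | add a b ha hb => simp only [map_add, mul_add, add_mul, ha, hb]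

lemma int13 (hkey : ∀ x : H, R * Δa K H x = Δ' K H x * R) (X : H ⊗[K] H) :
    leg13 K H R * D13 K H X = D13' K H X * leg13 K H R := by
  have h := congrArg (p23 K H) (int1 R hkey X)
  rw [map_mul, map_mul, p23_leg12, p23_D1, p23_D1'] at h
  exact h

variable {F}

lemma cocA (hcoc : leg12 K H F * copL K H F = leg23 K H F * copR K H F) :
    leg12 K H F * D1 K H F = leg23 K H F * D2 K H F := by
  rw [← copL_eq, ← copR_eq]; exact hcoc

lemma cocC3 (hcoc : leg12 K H F * copL K H F = leg23 K H F * copR K H F) :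
    leg13 K H F * D13 K H F = leg23 K H (τ K H F) * D2' K H F := by
  have h := congrArg (p23 K H) (cocA hcoc)
  rw [map_mul, map_mul, p23_leg12, p23_D1, p23_leg23, p23_D2] at h
  exact h

lemma cocC4 (hcoc : leg12 K H F * copL K H F = leg23 K H F * copR K H F) :
    leg12 K H (τ K H F) * D1' K H F = leg13 K H F * D13 K H (τ K H F) := by
  have h := congrArg (p12 K H) (cocA hcoc)
  rw [map_mul, map_mul, p12_leg12, p12_D1, p12_leg23, p12_D2] at h
  exact h

lemma cocC1 (hcoc : leg12 K H F * copL K H F = leg23 K H F * copR K H F) :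
    leg13 K H (τ K H F) * D13' K H F = leg12 K H F * D1 K H (τ K H F) := by
  have h := congrArg (p23 K H) (cocC4 hcoc)
  rw [map_mul, map_mul, p23_leg12, p23_D1', p23_leg13, p23_D13] at h
  exact h

lemma cocC5 (hcoc : leg12 K H F * copL K H F = leg23 K H F * copR K H F) :
    leg23 K H F * D2 K H (τ K H F) = leg13 K H (τ K H F) * D13' K H (τ K H F) := by
  have h := congrArg (p12 K H) (cocC3 hcoc)
  rw [map_mul, map_mul, p12_leg13, p12_D13, p12_leg23, p12_D2'] at h
  exact h

variable {Finv}

lemma cocInv (hinv₁ : F * Finv = 1) (hinv₂ : Finv * F = 1)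
    (hcoc : leg12 K H F * copL K H F = leg23 K H F * copR K H F) :
    D1 K H Finv * leg12 K H Finv = D2 K H Finv * leg23 K H Finv := by
  have h1 : (D1 K H Finv * leg12 K H Finv) * (leg12 K H F * D1 K H F) = 1 := by
    rw [mul_assoc, ← mul_assoc (leg12 K H Finv), ← map_mul, hinv₂, map_one, one_mul,
      ← map_mul, hinv₂, map_one]
  have h2 : (leg12 K H F * D1 K H F) * (D2 K H Finv * leg23 K H Finv) = 1 := by
    rw [cocA hcoc, mul_assoc, ← mul_assoc (D2 K H F), ← map_mul, hinv₁, map_one, one_mul,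
      ← map_mul, hinv₁, map_one]
  exact left_inv_eq_right_inv h1 h2

lemma cocC3inv (hinv₁ : F * Finv = 1) (hinv₂ : Finv * F = 1)
    (hcoc : leg12 K H F * copL K H F = leg23 K H F * copR K H F) :
    D2' K H Finv = D13 K H Finv * (leg13 K H Finv * leg23 K H (τ K H F)) := by
  have hττ : τ K H Finv * τ K H F = 1 := by rw [← map_mul, hinv₂, map_one]
  have hττ' : τ K H F * τ K H Finv = 1 := by rw [← map_mul, hinv₁, map_one]
  have hD2' : D2' K H F * D2' K H Finv = 1 := by rw [← map_mul, hinv₁, map_one]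
  have hx : leg23 K H (τ K H Finv) * (leg13 K H F * D13 K H F) = D2' K H F := by
    rw [cocC3 hcoc, ← mul_assoc, ← map_mul, hττ, map_one, one_mul]
  have hc : (D13 K H Finv * (leg13 K H Finv * leg23 K H (τ K H F))) * D2' K H F = 1 := by
    rw [← hx]
    simp only [mul_assoc]
    rw [show ∀ t, leg23 K H (τ K H F) * (leg23 K H (τ K H Finv) * t) = t by
      intro t; rw [← mul_assoc, ← map_mul, hττ', map_one, one_mul]]
    rw [show ∀ t, leg13 K H Finv * (leg13 K H F * t) = t by
      intro t; rw [← mul_assoc, ← map_mul, hinv₂, map_one, one_mul]]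
    rw [← map_mul, hinv₂, map_one]
  exact (left_inv_eq_right_inv hc hD2').symm

lemma cocC4inv (hinv₁ : F * Finv = 1) (hinv₂ : Finv * F = 1)
    (hcoc : leg12 K H F * copL K H F = leg23 K H F * copR K H F) :
    D1' K H Finv = D13 K H (τ K H Finv) * (leg13 K H Finv * leg12 K H (τ K H F)) := by
  have hττ : τ K H Finv * τ K H F = 1 := by rw [← map_mul, hinv₂, map_one]
  have hττ' : τ K H F * τ K H Finv = 1 := by rw [← map_mul, hinv₁, map_one]
  have hD1' : D1' K H F * D1' K H Finv = 1 := by rw [← map_mul, hinv₁, map_one]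
  have hx : leg12 K H (τ K H Finv) * (leg13 K H F * D13 K H (τ K H F)) = D1' K H F := by
    rw [← cocC4 hcoc, ← mul_assoc, ← map_mul, hττ, map_one, one_mul]
  have hc : (D13 K H (τ K H Finv) * (leg13 K H Finv * leg12 K H (τ K H F))) * D1' K H F = 1 := by
    rw [← hx]
    simp only [mul_assoc]
    rw [show ∀ t, leg12 K H (τ K H F) * (leg12 K H (τ K H Finv) * t) = t by
      intro t; rw [← mul_assoc, ← map_mul, hττ', map_one, one_mul]]
    rw [show ∀ t, leg13 K H Finv * (leg13 K H F * t) = t by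
      intro t; rw [← mul_assoc, ← map_mul, hinv₂, map_one, one_mul]]
    rw [← map_mul, hττ, map_one]
  exact (left_inv_eq_right_inv hc hD1').symm

variable (F Finv)

lemma D1_tmul_asc (x y : H) :
    D1 K H (x ⊗ₜ y) = asc K H ((Coalgebra.comul (R := K) x) ⊗ₜ y) := rfl

lemma tw1 (W : H ⊗[K] H) :
    (TensorProduct.assoc K H H H) ((TensorProduct.map (twComul F Finv) LinearMap.id) W) =
      leg12 K H F * D1 K H W * leg12 K H Finv := by
  induction W using TensorProduct.induction_on with
  | zero => simp
  | tmul x y =>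
      show asc K H ((F * (Coalgebra.comul (R := K) x * Finv)) ⊗ₜ y) = _
      have h1 : (F * (Coalgebra.comul (R := K) x * Finv)) ⊗ₜ[K] y =
          (F ⊗ₜ (1:H)) * (((Coalgebra.comul (R := K) x) ⊗ₜ y) * (Finv ⊗ₜ (1:H))) := by
        rw [Algebra.TensorProduct.tmul_mul_tmul, Algebra.TensorProduct.tmul_mul_tmul,
          mul_one, one_mul]
      rw [h1, map_mul, map_mul, asc_tmul_one, asc_tmul_one, ← D1_tmul_asc, ← mul_assoc]
  | add a b ha hb => simp only [map_add, mul_add, add_mul, ha, hb]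

lemma tw2 (W : H ⊗[K] H) :
    (TensorProduct.map LinearMap.id (twComul F Finv)) W =
      leg23 K H F * D2 K H W * leg23 K H Finv := by
  induction W using TensorProduct.induction_on with
  | zero => simp
  | tmul x y =>
      show x ⊗ₜ (F * (Coalgebra.comul (R := K) y * Finv)) = _
      rw [leg23_apply, leg23_apply, D2_tmul, Algebra.TensorProduct.tmul_mul_tmul,
        Algebra.TensorProduct.tmul_mul_tmul, one_mul, mul_one, ← mul_assoc,
        show (Δa K H) y = Coalgebra.comul (R := K) y from rfl]
  | add a b ha hb => simp only [map_add, mul_add, add_mul, ha, hb]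

end WithData

end TwAux

/-- if `(H,R)` is quasi-triangular and `F` a normalized cocycle twist,
then `R^F = F₂₁ R F⁻¹` is a universal R-matrix for the twisted bialgebra `H^F`. -/
theorem twisted_R_matrix_is_quasitriangular
    {K H : Type} [CommRing K] [Ring H] [Bialgebra K H]
    (R Rinv F Finv : H ⊗[K] H)
    -- quasi-triangularity of (H, R)
    (hR₁ : R * Rinv = 1) (hR₂ : Rinv * R = 1)
    (hRΔ : ∀ x : H,
      R * Coalgebra.comul (R := K) x * Rinv =
        TensorProduct.comm K H H (Coalgebra.comul (R := K) x))
    (hhex₁ : copL K H R = leg13 K H R * leg23 K H R)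
    (hhex₂ : copR K H R = leg13 K H R * leg12 K H R)
    (hRn₁ : ctL K H R = 1) (hRn₂ : ctR K H R = 1)
    -- F is a normalized cocycle twist
    (hinv₁ : F * Finv = 1) (hinv₂ : Finv * F = 1)
    (hcoc : leg12 K H F * copL K H F = leg23 K H F * copR K H F)
    (hnorm₁ : ctL K H F = 1) (hnorm₂ : ctR K H F = 1) :
    -- R^F = F₂₁ R F⁻¹ is a universal R-matrix for (H, Δ_F)
    (∃ RFinv : H ⊗[K] H,
      (TensorProduct.comm K H H F * R * Finv) * RFinv = 1 ∧
      RFinv * (TensorProduct.comm K H H F * R * Finv) = 1 ∧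
      ∀ x : H,
        (TensorProduct.comm K H H F * R * Finv) * twComul F Finv x * RFinv =
          TensorProduct.comm K H H (twComul F Finv x)) ∧
    (TensorProduct.assoc K H H H)
        ((TensorProduct.map (twComul F Finv) LinearMap.id)
          (TensorProduct.comm K H H F * R * Finv)) =
      leg13 K H (TensorProduct.comm K H H F * R * Finv) *
        leg23 K H (TensorProduct.comm K H H F * R * Finv) ∧
    (TensorProduct.map LinearMap.id (twComul F Finv))
        (TensorProduct.comm K H H F * R * Finv) =
      leg13 K H (TensorProduct.comm K H H F * R * Finv) *
        leg12 K H (TensorProduct.comm K H H F * R * Finv) ∧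
    ctL K H (TensorProduct.comm K H H F * R * Finv) = 1 ∧
    ctR K H (TensorProduct.comm K H H F * R * Finv) = 1 := by
  have hτ : ∀ u : H ⊗[K] H, TensorProduct.comm K H H u = TwAux.τ K H u := fun _ => rfl
  simp only [hτ]
  have hkey : ∀ x : H, R * TwAux.Δa K H x = TwAux.Δ' K H x * R := by
    intro x
    have h := hRΔ x
    calc R * TwAux.Δa K H x = R * TwAux.Δa K H x * (Rinv * R) := by rw [hR₂, mul_one]
      _ = (R * TwAux.Δa K H x * Rinv) * R := by rw [← mul_assoc]
      _ = TwAux.Δ' K H x * R := by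
          rw [show R * TwAux.Δa K H x * Rinv = TwAux.Δ' K H x from h]
  have hτmul : TwAux.τ K H F * TwAux.τ K H Finv = 1 := by rw [← map_mul, hinv₁, map_one]
  have hτmul' : TwAux.τ K H Finv * TwAux.τ K H F = 1 := by rw [← map_mul, hinv₂, map_one]
  have consL : ∀ {M : Type} [Monoid M] {a b : M}, a * b = 1 → ∀ t : M, a * (b * t) = t := by
    intro M _ a b hab t; rw [← mul_assoc, hab, one_mul]
  refine ⟨⟨F * Rinv * TwAux.τ K H Finv, ?_, ?_, ?_⟩, ?_, ?_, ?_, ?_⟩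
  · simp only [mul_assoc]
    rw [consL hinv₂, consL hR₁, hτmul]
  · simp only [mul_assoc]
    rw [consL hτmul', consL hR₂, hinv₁]
  · intro x
    have htw : twComul F Finv x = F * (TwAux.Δa K H x * Finv) := rfl
    rw [htw, map_mul, map_mul,
      show TwAux.τ K H (TwAux.Δa K H x) = TwAux.Δ' K H x from rfl]
    simp only [mul_assoc]
    rw [consL hinv₂, consL hinv₂,
      show ∀ t, R * (TwAux.Δa K H x * t) = TwAux.Δ' K H x * (R * t) from
        fun t => by rw [← mul_assoc, hkey x, mul_assoc],
      consL hR₁]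
  · -- hexagon 1
    rw [TwAux.tw1]
    have hhexD1 : TwAux.D1 K H R = leg13 K H R * leg23 K H R := by
      rw [← TwAux.copL_eq]; exact hhex₁
    have hint2c : ∀ t, leg23 K H R * (TwAux.D2 K H Finv * t) =
        TwAux.D2' K H Finv * (leg23 K H R * t) :=
      fun t => by rw [← mul_assoc, TwAux.int2 R hkey Finv, mul_assoc]
    have hint13c : ∀ X t, leg13 K H R * (TwAux.D13 K H X * t) =
        TwAux.D13' K H X * (leg13 K H R * t) :=
      fun X t => by rw [← mul_assoc, TwAux.int13 R hkey X, mul_assoc]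
    have hC1c : ∀ t, leg12 K H F * (TwAux.D1 K H (TwAux.τ K H F) * t) =
        leg13 K H (TwAux.τ K H F) * (TwAux.D13' K H F * t) :=
      fun t => by rw [← mul_assoc, ← TwAux.cocC1 hcoc, mul_assoc]
    have hcol : ∀ t, TwAux.D13' K H F * (TwAux.D13' K H Finv * t) = t :=
      fun t => by rw [← mul_assoc, ← map_mul, hinv₁, map_one, one_mul]
    simp only [map_mul, hhexD1]
    simp only [mul_assoc]
    rw [TwAux.cocInv hinv₁ hinv₂ hcoc]
    rw [hint2c, TwAux.cocC3inv hinv₁ hinv₂ hcoc]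
    simp only [mul_assoc]
    rw [hint13c, hC1c, hcol]
  · -- hexagon 2
    rw [TwAux.tw2]
    have hhexD2 : TwAux.D2 K H R = leg13 K H R * leg12 K H R := by
      rw [← TwAux.copR_eq]; exact hhex₂
    have hint1c : ∀ t, leg12 K H R * (TwAux.D1 K H Finv * t) =
        TwAux.D1' K H Finv * (leg12 K H R * t) :=
      fun t => by rw [← mul_assoc, TwAux.int1 R hkey Finv, mul_assoc]
    have hint13c : ∀ X t, leg13 K H R * (TwAux.D13 K H X * t) =
        TwAux.D13' K H X * (leg13 K H R * t) :=
      fun X t => by rw [← mul_assoc, TwAux.int13 R hkey X, mul_assoc]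
    have hC5c : ∀ t, leg23 K H F * (TwAux.D2 K H (TwAux.τ K H F) * t) =
        leg13 K H (TwAux.τ K H F) * (TwAux.D13' K H (TwAux.τ K H F) * t) :=
      fun t => by rw [← mul_assoc, TwAux.cocC5 hcoc, mul_assoc]
    have hcol : ∀ t, TwAux.D13' K H (TwAux.τ K H F) *
        (TwAux.D13' K H (TwAux.τ K H Finv) * t) = t :=
      fun t => by rw [← mul_assoc, ← map_mul, hτmul, map_one, one_mul]
    have hcocInv' : TwAux.D2 K H Finv * leg23 K H Finv =
        TwAux.D1 K H Finv * leg12 K H Finv :=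
      (TwAux.cocInv hinv₁ hinv₂ hcoc).symm
    simp only [map_mul, hhexD2]
    simp only [mul_assoc]
    rw [hcocInv']
    rw [hint1c, TwAux.cocC4inv hinv₁ hinv₂ hcoc]
    simp only [mul_assoc]
    rw [hint13c, hC5c, hcol]
  · -- counit left
    rw [TwAux.ctL_eq, map_mul, map_mul, TwAux.eL_τ]
    have h1 : TwAux.eR K H F = 1 := by rw [← TwAux.ctR_eq]; exact hnorm₂
    have h2 : TwAux.eL K H R = 1 := by rw [← TwAux.ctL_eq]; exact hRn₁
    have h3 : TwAux.eL K H Finv = 1 := by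
      have h4 : TwAux.eL K H F * TwAux.eL K H Finv = 1 := by
        rw [← map_mul, hinv₁, map_one]
      have h5 : TwAux.eL K H F = 1 := by rw [← TwAux.ctL_eq]; exact hnorm₁
      rwa [h5, one_mul] at h4
    rw [h1, h2, h3, one_mul, one_mul]
  · -- counit right
    rw [TwAux.ctR_eq, map_mul, map_mul, TwAux.eR_τ]
    have h1 : TwAux.eL K H F = 1 := by rw [← TwAux.ctL_eq]; exact hnorm₁
    have h2 : TwAux.eR K H R = 1 := by rw [← TwAux.ctR_eq]; exact hRn₂
    have h3 : TwAux.eR K H Finv = 1 := by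
      have h4 : TwAux.eR K H F * TwAux.eR K H Finv = 1 := by
        rw [← map_mul, hinv₁, map_one]
      have h5 : TwAux.eR K H F = 1 := by rw [← TwAux.ctR_eq]; exact hnorm₂
      rwa [h5, one_mul] at h4
    rw [h1, h2, h3, one_mul, one_mul]
end

section
/- Let H be a bialgebra, A a left H-module algebra, and F a normalized cocycle twist on H. Then the map φ: A_F ⋊ H^F → A ⋊ H defined by φ(a ⋊ L) = (F̄₁ ▷ a) ⋊ F̄₂L is an algebra isomorphism between the smash product of the twisted module algebra A_F with the twisted bialgebra H^F and the original smash product A ⋊ H, with inverse φ⁻¹(a ⋊ L) = (F₁ ▷ a) ⋊ F₂L. -/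
open TensorProduct

/-- The twisted star product `a ⋆_F b = (F̄₁ ▷ a) · (F̄₂ ▷ b)` determined by the
action `act` and the inverse twist `Finv`. -/
noncomputable def starF {K H A : Type} [CommRing K] [Ring H] [Bialgebra K H]
    [Ring A] [Algebra K A]
    (act : H →ₗ[K] A →ₗ[K] A) (Finv : H ⊗[K] H) (a b : A) : A :=
  LinearMap.mul' K A ((TensorProduct.map (act.flip a) (act.flip b)) Finv)

/-- For `G = Σ G₁ ⊗ G₂ ∈ H ⊗ H`, the element `Σ (G₂ ▷ a) ⊗ G₁` of `A ⊗ H`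
(e.g. the target map `t(a) = (R₂ ▷ a) ⋊ R₁` of the smash product bialgebroid). -/
noncomputable def tmap {K H A : Type} [CommRing K] [Ring H] [Bialgebra K H]
    [Ring A] [Algebra K A]
    (act : H →ₗ[K] A →ₗ[K] A) (a : A) (G : H ⊗[K] H) : A ⊗[K] H :=
  (TensorProduct.comm K H A) ((TensorProduct.map LinearMap.id (act.flip a)) G)

/-- The bialgebroid counit `ε̃(a ⋊ L) = ε(L) a` of the smash product `A ⋊ H`. -/
noncomputable def epsSm (K H A : Type) [CommRing K] [Ring H] [Bialgebra K H]
    [Ring A] [Algebra K A] : A ⊗[K] H →ₗ[K] A :=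
  (TensorProduct.rid K A).toLinearMap ∘ₗ TensorProduct.map LinearMap.id Coalgebra.counit

/-!
`H ⊗ H` acts on `A ⊗ H` by `G ▷ (a ⋊ L) = G₁ ▷ a ⋊ G₂L`, and `H ⊗ H ⊗ H` acts likewise on
`A ⊗ A ⊗ H`; `φ` and `ψ` are the actions of `F⁻¹` and `F`, hence mutually inverse. Both smash
products are "act on `a ⊗ b ⊗ J`, then multiply the two `A`-factors": `A ⋊ H` by `1 ⊗ ΔL`,
`A_F ⋊ H^F` by `(F⁻¹ ⊗ 1)(1 ⊗ F ΔL F⁻¹)`. Since `A` is a module algebra, acting by `G` after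
multiplying is acting by `(Δ ⊗ id)G` before, so `φ ∘ mF` and `m ∘ (φ × φ)` are given by
`(Δ ⊗ id)(F⁻¹)(F⁻¹ ⊗ 1)(1 ⊗ F)(1 ⊗ ΔL)(1 ⊗ F⁻¹)` and `(id ⊗ Δ)(F⁻¹)(1 ⊗ ΔL)(1 ⊗ F⁻¹)`, which
agree by the cocycle identity for `F⁻¹`.
-/

theorem TensorProduct.exists_fin_sum_tmul {R M N : Type*} [CommSemiring R] [AddCommMonoid M]
    [AddCommMonoid N] [Module R M] [Module R N] (x : M ⊗[R] N) :
    ∃ (n : ℕ) (u : Fin n → M) (v : Fin n → N), x = ∑ i, u i ⊗ₜ[R] v i := by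
  classical
  obtain ⟨S, rfl⟩ := exists_finset x
  refine ⟨S.card, fun i => (S.equivFin.symm i).1.1, fun i => (S.equivFin.symm i).1.2, ?_⟩
  rw [← S.sum_coe_sort]
  exact (S.equivFin.symm.sum_comp fun p => p.1.1 ⊗ₜ p.1.2).symm

theorem TensorProduct.eq_of_forall_fin_sum_tmul {R M N P : Type*} [CommSemiring R]
    [AddCommMonoid M] [AddCommMonoid N] [AddCommMonoid P] [Module R M] [Module R N] [Module R P]
    (x : M ⊗[R] N) (Φ : M ⊗[R] N →ₗ[R] P) {y : P}
    (h : ∀ (n : ℕ) (u : Fin n → M) (v : Fin n → N),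
      x = ∑ i, u i ⊗ₜ[R] v i → y = ∑ i, Φ (u i ⊗ₜ v i)) :
    y = Φ x := by
  obtain ⟨n, u, v, hx⟩ := exists_fin_sum_tmul x
  rw [h n u v hx, hx, map_sum]

section TensorAction

variable {K B C M N : Type*} [CommSemiring K] [Semiring B] [Algebra K B] [Semiring C]
  [Algebra K C] [AddCommMonoid M] [Module K M] [AddCommMonoid N] [Module K N]

noncomputable def tensorAction (f : B →ₐ[K] Module.End K M) (g : C →ₐ[K] Module.End K N) :
    B ⊗[K] C →ₐ[K] Module.End K (M ⊗[K] N) :=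
  Module.endTensorEndAlgHom.comp (Algebra.TensorProduct.map f g)

@[simp]
theorem tensorAction_tmul_tmul (f : B →ₐ[K] Module.End K M) (g : C →ₐ[K] Module.End K N)
    (b : B) (c : C) (m : M) (n : N) :
    tensorAction f g (b ⊗ₜ c) (m ⊗ₜ n) = f b m ⊗ₜ g c n :=
  rfl

end TensorAction

section Twist

variable {K H : Type} [CommRing K] [Ring H] [Bialgebra K H]

variable (K H) in
noncomputable def copLAlgHom : H ⊗[K] H →ₐ[K] H ⊗[K] (H ⊗[K] H) :=
  (Algebra.TensorProduct.assoc K K K H H H).toAlgHom.comp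
    (Algebra.TensorProduct.map (Bialgebra.comulAlgHom K H) (AlgHom.id K H))

variable (K H) in
noncomputable def copRAlgHom : H ⊗[K] H →ₐ[K] H ⊗[K] (H ⊗[K] H) :=
  Algebra.TensorProduct.map (AlgHom.id K H) (Bialgebra.comulAlgHom K H)

variable (K H) in
noncomputable def ctLAlgHom : H ⊗[K] H →ₐ[K] H :=
  (Algebra.TensorProduct.lid K H).toAlgHom.comp
    (Algebra.TensorProduct.map (Bialgebra.counitAlgHom K H) (AlgHom.id K H))

theorem copLAlgHom_apply (x : H ⊗[K] H) : copLAlgHom K H x = copL K H x :=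
  LinearMap.congr_fun (TensorProduct.ext' (g := (copLAlgHom K H).toLinearMap) fun _ _ => rfl) x

theorem copRAlgHom_apply (x : H ⊗[K] H) : copRAlgHom K H x = copR K H x :=
  LinearMap.congr_fun (TensorProduct.ext' (g := (copRAlgHom K H).toLinearMap) fun _ _ => rfl) x

theorem ctLAlgHom_apply (x : H ⊗[K] H) : ctLAlgHom K H x = ctL K H x :=
  LinearMap.congr_fun (TensorProduct.ext' (g := (ctLAlgHom K H).toLinearMap) fun _ _ => rfl) x

theorem copL_mul (x y : H ⊗[K] H) : copL K H (x * y) = copL K H x * copL K H y := by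
  simp only [← copLAlgHom_apply, map_mul]

theorem copR_mul (x y : H ⊗[K] H) : copR K H (x * y) = copR K H x * copR K H y := by
  simp only [← copRAlgHom_apply, map_mul]

theorem ctL_mul (x y : H ⊗[K] H) : ctL K H (x * y) = ctL K H x * ctL K H y := by
  simp only [← ctLAlgHom_apply, map_mul]

theorem copL_one : copL K H 1 = 1 := by
  rw [← copLAlgHom_apply, map_one]

theorem copR_one : copR K H 1 = 1 := by
  rw [← copRAlgHom_apply, map_one]

theorem ctL_one : ctL K H 1 = 1 := by
  rw [← ctLAlgHom_apply, map_one]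

theorem copR_one_tmul (L : H) :
    copR K H (1 ⊗ₜ L) = leg23 K H (Coalgebra.comul (R := K) L) := by
  simp [copR, leg23]

theorem cocycle_inv {F Finv : H ⊗[K] H}
    (hinv₁ : F * Finv = 1) (hinv₂ : Finv * F = 1)
    (hcoc : leg12 K H F * copL K H F = leg23 K H F * copR K H F) :
    copL K H Finv * leg12 K H Finv * leg23 K H F = copR K H Finv := by
  have hR : copR K H F * copR K H Finv = 1 := by rw [← copR_mul, hinv₁, copR_one]
  have hL : copL K H Finv * copL K H F = 1 := by rw [← copL_mul, hinv₂, copL_one]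
  have h12 : leg12 K H Finv * leg12 K H F = 1 := by rw [← map_mul, hinv₂, map_one]
  calc copL K H Finv * leg12 K H Finv * leg23 K H F
      = copL K H Finv * leg12 K H Finv * (leg23 K H F * copR K H F) * copR K H Finv := by
        simp only [mul_assoc, hR, mul_one]
    _ = copL K H Finv * (leg12 K H Finv * leg12 K H F) * copL K H F * copR K H Finv := by
        rw [← hcoc]; simp only [mul_assoc]
    _ = copR K H Finv := by rw [h12, mul_one, hL, one_mul]

theorem cocycle_inv_mul_twistedComul {F Finv : H ⊗[K] H}
    (hinv₁ : F * Finv = 1) (hinv₂ : Finv * F = 1)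
    (hcoc : leg12 K H F * copL K H F = leg23 K H F * copR K H F) (L : H) :
    copL K H Finv * (leg12 K H Finv * leg23 K H (F * Coalgebra.comul (R := K) L * Finv)) =
      copR K H (Finv * (1 ⊗ₜ L)) * leg23 K H Finv := by
  rw [copR_mul, copR_one_tmul, ← cocycle_inv hinv₁ hinv₂ hcoc]
  simp only [map_mul, mul_assoc]

theorem ctL_inv {F Finv : H ⊗[K] H} (hinv₁ : F * Finv = 1) (hnorm : ctL K H F = 1) :
    ctL K H Finv = 1 := by
  rw [← ctL_one (K := K), ← hinv₁, ctL_mul, hnorm, one_mul]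

end Twist

section Smash

variable {K H A : Type} [CommRing K] [Ring H] [Bialgebra K H] [Ring A] [Algebra K A]
  (ρ : H →ₐ[K] Module.End K A)

noncomputable abbrev smashAction : H ⊗[K] H →ₐ[K] Module.End K (A ⊗[K] H) :=
  tensorAction ρ (Algebra.lmul K H)

noncomputable abbrev smashAction₃ :
    H ⊗[K] (H ⊗[K] H) →ₐ[K] Module.End K (A ⊗[K] (A ⊗[K] H)) :=
  tensorAction ρ (smashAction ρ)

variable (K H A) in
noncomputable def mulLeftFactors : A ⊗[K] (A ⊗[K] H) →ₗ[K] A ⊗[K] H :=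
  TensorProduct.map (LinearMap.mul' K A) LinearMap.id ∘ₗ
    (TensorProduct.assoc K A A H).symm.toLinearMap

@[simp]
theorem mulLeftFactors_tmul (a b : A) (x : H) :
    mulLeftFactors K H A (a ⊗ₜ (b ⊗ₜ x)) = (a * b) ⊗ₜ x := by
  simp [mulLeftFactors]

theorem smashAction₃_tmul_one (u : H) (a : A) (y : A ⊗[K] H) :
    smashAction₃ ρ (u ⊗ₜ 1) (a ⊗ₜ y) = ρ u a ⊗ₜ y := by
  simp [tensorAction, Module.endTensorEndAlgHom_apply]

theorem smashAction₃_leg23 (G : H ⊗[K] H) (a : A) (y : A ⊗[K] H) :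
    smashAction₃ ρ (leg23 K H G) (a ⊗ₜ y) = a ⊗ₜ smashAction ρ G y := by
  simp [leg23, tensorAction, Module.endTensorEndAlgHom_apply]

theorem mulLeftFactors_smashAction₃_leg12 (G : H ⊗[K] H) (a c : A) (x : H) :
    mulLeftFactors K H A (smashAction₃ ρ (leg12 K H G) (a ⊗ₜ (c ⊗ₜ x))) =
      starF ρ.toLinearMap G a c ⊗ₜ x := by
  induction G with
  | zero => simp [starF]
  | add G G' hG hG' => simp only [map_add, LinearMap.add_apply, hG, hG', starF, add_tmul]
  | tmul u v => simp [leg12, starF]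

theorem mulLeftFactors_smashAction₃_copL
    (hρ : ∀ (u : H) (a b : A),
      ρ u (a * b) = LinearMap.mul' K A (tensorAction ρ ρ (Coalgebra.comul (R := K) u) (a ⊗ₜ b)))
    (G : H ⊗[K] H) :
    mulLeftFactors K H A ∘ₗ smashAction₃ ρ (copL K H G) =
      smashAction ρ G ∘ₗ mulLeftFactors K H A := by
  induction G with
  | zero => simp
  | add G G' hG hG' => simp only [map_add, LinearMap.add_comp, LinearMap.comp_add, hG, hG']
  | tmul u w =>
    refine ext_threefold' fun a b x => ?_
    rw [LinearMap.comp_apply, LinearMap.comp_apply, mulLeftFactors_tmul, tensorAction_tmul_tmul, hρ,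
      show copL K H (u ⊗ₜ w) = TensorProduct.assoc K H H H (Coalgebra.comul u ⊗ₜ w) from rfl]
    induction Coalgebra.comul (R := K) u with
    | zero => simp
    | add X X' hX hX' => simp only [add_tmul, map_add, LinearMap.add_apply, hX, hX']
    | tmul u₁ u₂ => simp

theorem smashAction_one_tmul_one
    (hρ : ∀ u : H, ρ u (1 : A) = Coalgebra.counit (R := K) u • (1 : A)) (G : H ⊗[K] H) :
    smashAction ρ G ((1 : A) ⊗ₜ (1 : H)) = (1 : A) ⊗ₜ ctL K H G := by
  induction G with
  | zero => simp
  | add G G' hG hG' => simp only [map_add, LinearMap.add_apply, hG, hG', tmul_add]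
  | tmul u w => simp [hρ, ctL, smul_tmul]

theorem eq_smashAction_of_fin_sum (φ : A ⊗[K] H →ₗ[K] A ⊗[K] H) (G : H ⊗[K] H)
    (hφ : ∀ (a : A) (L : H) (n : ℕ) (g1 g2 : Fin n → H),
      G = ∑ i, g1 i ⊗ₜ[K] g2 i → φ (a ⊗ₜ[K] L) = ∑ i, ρ (g1 i) a ⊗ₜ[K] (g2 i * L)) :
    φ = smashAction ρ G :=
  TensorProduct.ext' fun a L =>
    eq_of_forall_fin_sum_tmul G (LinearMap.applyₗ (a ⊗ₜ L) ∘ₗ (smashAction ρ).toLinearMap)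
      fun n g1 g2 h => by rw [hφ a L n g1 g2 h]; simp

theorem smashMul_tmul_of_fin_sum (m : (A ⊗[K] H) →ₗ[K] (A ⊗[K] H) →ₗ[K] (A ⊗[K] H))
    (hm : ∀ (a b : A) (L J : H) (n : ℕ) (L1 L2 : Fin n → H),
      Coalgebra.comul (R := K) L = ∑ i, L1 i ⊗ₜ[K] L2 i →
      m (a ⊗ₜ[K] L) (b ⊗ₜ[K] J) = ∑ i, (a * ρ (L1 i) b) ⊗ₜ[K] (L2 i * J))
    (a : A) (L : H) (y : A ⊗[K] H) :
    m (a ⊗ₜ L) y = mulLeftFactors K H A (smashAction₃ ρ (copR K H (1 ⊗ₜ L)) (a ⊗ₜ y)) := by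
  induction y with
  | zero => simp
  | add y y' hy hy' => simp only [map_add, tmul_add, hy, hy']
  | tmul b J =>
    rw [copR_one_tmul]
    exact eq_of_forall_fin_sum_tmul _ (mulLeftFactors K H A ∘ₗ LinearMap.applyₗ (a ⊗ₜ (b ⊗ₜ J)) ∘ₗ
      ((smashAction₃ ρ).comp (leg23 K H)).toLinearMap)
      fun n L1 L2 h => by rw [hm a b L J n L1 L2 h]; simp [smashAction₃_leg23]

theorem twistedSmashMul_tmul_of_fin_sum (F Finv : H ⊗[K] H)
    (mF : (A ⊗[K] H) →ₗ[K] (A ⊗[K] H) →ₗ[K] (A ⊗[K] H))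
    (hmF : ∀ (a b : A) (L J : H) (n : ℕ) (L1 L2 : Fin n → H),
      F * Coalgebra.comul (R := K) L * Finv = ∑ i, L1 i ⊗ₜ[K] L2 i →
      mF (a ⊗ₜ[K] L) (b ⊗ₜ[K] J) =
        ∑ i, starF ρ.toLinearMap Finv a (ρ (L1 i) b) ⊗ₜ[K] (L2 i * J))
    (a b : A) (L J : H) :
    mF (a ⊗ₜ L) (b ⊗ₜ J) = mulLeftFactors K H A (smashAction₃ ρ
      (leg12 K H Finv * leg23 K H (F * Coalgebra.comul (R := K) L * Finv)) (a ⊗ₜ (b ⊗ₜ J))) := by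
  rw [map_mul, Module.End.mul_apply]
  exact eq_of_forall_fin_sum_tmul _ (mulLeftFactors K H A ∘ₗ smashAction₃ ρ (leg12 K H Finv) ∘ₗ
      LinearMap.applyₗ (a ⊗ₜ (b ⊗ₜ J)) ∘ₗ ((smashAction₃ ρ).comp (leg23 K H)).toLinearMap)
    fun n L1 L2 h => by
      rw [hmF a b L J n L1 L2 h]
      simp [smashAction₃_leg23, mulLeftFactors_smashAction₃_leg12]

theorem smashMul_smashAction (m : (A ⊗[K] H) →ₗ[K] (A ⊗[K] H) →ₗ[K] (A ⊗[K] H))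
    (hm : ∀ (a : A) (L : H) (y : A ⊗[K] H),
      m (a ⊗ₜ L) y = mulLeftFactors K H A (smashAction₃ ρ (copR K H (1 ⊗ₜ L)) (a ⊗ₜ y)))
    (G : H ⊗[K] H) (a : A) (L : H) (y : A ⊗[K] H) :
    m (smashAction ρ G (a ⊗ₜ L)) y =
      mulLeftFactors K H A (smashAction₃ ρ (copR K H (G * (1 ⊗ₜ L))) (a ⊗ₜ y)) := by
  induction G with
  | zero => simp
  | add G G' hG hG' => simp only [map_add, LinearMap.add_apply, add_mul, hG, hG']
  | tmul u w =>
    have hsplit : (u ⊗ₜ[K] w) * (1 ⊗ₜ L) = (1 ⊗ₜ (w * L)) * (u ⊗ₜ 1) := by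
      simp [Algebra.TensorProduct.tmul_mul_tmul]
    have hcopR : copR K H (u ⊗ₜ 1) = u ⊗ₜ 1 := by
      simp [copR, Bialgebra.comul_one, Algebra.TensorProduct.one_def]
    rw [hsplit, copR_mul, map_mul, Module.End.mul_apply, hcopR, smashAction₃_tmul_one,
      tensorAction_tmul_tmul, hm]
    rfl

theorem smashAction_map_twistedSmashMul {F Finv : H ⊗[K] H}
    (hinv₁ : F * Finv = 1) (hinv₂ : Finv * F = 1)
    (hcoc : leg12 K H F * copL K H F = leg23 K H F * copR K H F)
    (hρ : ∀ (u : H) (a b : A),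
      ρ u (a * b) = LinearMap.mul' K A (tensorAction ρ ρ (Coalgebra.comul (R := K) u) (a ⊗ₜ b)))
    (m mF : (A ⊗[K] H) →ₗ[K] (A ⊗[K] H) →ₗ[K] (A ⊗[K] H))
    (hm : ∀ (a : A) (L : H) (y : A ⊗[K] H),
      m (a ⊗ₜ L) y = mulLeftFactors K H A (smashAction₃ ρ (copR K H (1 ⊗ₜ L)) (a ⊗ₜ y)))
    (hmF : ∀ (a b : A) (L J : H), mF (a ⊗ₜ L) (b ⊗ₜ J) = mulLeftFactors K H A (smashAction₃ ρ
      (leg12 K H Finv * leg23 K H (F * Coalgebra.comul (R := K) L * Finv)) (a ⊗ₜ (b ⊗ₜ J))))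
    (x y : A ⊗[K] H) :
    smashAction ρ Finv (mF x y) = m (smashAction ρ Finv x) (smashAction ρ Finv y) := by
  suffices mF.compr₂ (smashAction ρ Finv) =
      m.compl₁₂ (smashAction ρ Finv) (smashAction ρ Finv) from
    LinearMap.congr_fun₂ this x y
  refine TensorProduct.ext' fun a L => TensorProduct.ext' fun b J => ?_
  set z : A ⊗[K] (A ⊗[K] H) := a ⊗ₜ (b ⊗ₜ J)
  calc smashAction ρ Finv (mF (a ⊗ₜ L) (b ⊗ₜ J))
      = mulLeftFactors K H A (smashAction₃ ρ (copL K H Finv *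
          (leg12 K H Finv * leg23 K H (F * Coalgebra.comul (R := K) L * Finv))) z) := by
        rw [hmF, map_mul (smashAction₃ ρ) (copL K H Finv), Module.End.mul_apply]
        exact (LinearMap.congr_fun (mulLeftFactors_smashAction₃_copL ρ hρ Finv) _).symm
    _ = mulLeftFactors K H A (smashAction₃ ρ (copR K H (Finv * (1 ⊗ₜ L)) * leg23 K H Finv) z) := by
        rw [cocycle_inv_mul_twistedComul hinv₁ hinv₂ hcoc]
    _ = m (smashAction ρ Finv (a ⊗ₜ L)) (smashAction ρ Finv (b ⊗ₜ J)) := by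
        rw [smashMul_smashAction ρ m hm, map_mul, Module.End.mul_apply, smashAction₃_leg23]

end Smash

theorem twisted_smash_product_isomorphism_general
    {K H A : Type} [CommRing K] [Ring H] [Bialgebra K H] [Ring A] [Algebra K A]
    (act : H →ₗ[K] A →ₗ[K] A)
    (hact_one : ∀ a : A, act 1 a = a)
    (hact_mul : ∀ (L J : H) (a : A), act (L * J) a = act L (act J a))
    (hact_unit : ∀ L : H, act L (1 : A) = Coalgebra.counit (R := K) L • (1 : A))
    (hact_alg : ∀ (L : H) (a b : A) (n : ℕ) (L1 L2 : Fin n → H),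
      Coalgebra.comul (R := K) L = ∑ i, L1 i ⊗ₜ[K] L2 i →
      act L (a * b) = ∑ i, act (L1 i) a * act (L2 i) b)
    -- F is a normalized cocycle twist
    (F Finv : H ⊗[K] H)
    (hinv₁ : F * Finv = 1) (hinv₂ : Finv * F = 1)
    (hcoc : leg12 K H F * copL K H F = leg23 K H F * copR K H F)
    (hnorm₁ : ctL K H F = 1)
    -- the smash product multiplication of A ⋊ H
    (m : (A ⊗[K] H) →ₗ[K] (A ⊗[K] H) →ₗ[K] (A ⊗[K] H))
    (hm : ∀ (a b : A) (L J : H) (n : ℕ) (L1 L2 : Fin n → H),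
      Coalgebra.comul (R := K) L = ∑ i, L1 i ⊗ₜ[K] L2 i →
      m (a ⊗ₜ[K] L) (b ⊗ₜ[K] J) = ∑ i, (a * act (L1 i) b) ⊗ₜ[K] (L2 i * J))
    -- the smash product multiplication of A_F ⋊ H^F
    (mF : (A ⊗[K] H) →ₗ[K] (A ⊗[K] H) →ₗ[K] (A ⊗[K] H))
    (hmF : ∀ (a b : A) (L J : H) (n : ℕ) (L1 L2 : Fin n → H),
      F * Coalgebra.comul (R := K) L * Finv = ∑ i, L1 i ⊗ₜ[K] L2 i →
      mF (a ⊗ₜ[K] L) (b ⊗ₜ[K] J) =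
        ∑ i, starF act Finv a (act (L1 i) b) ⊗ₜ[K] (L2 i * J))
    -- the maps φ and ψ
    (φ ψ : A ⊗[K] H →ₗ[K] A ⊗[K] H)
    (hφ : ∀ (a : A) (L : H) (n : ℕ) (g1 g2 : Fin n → H),
      Finv = ∑ i, g1 i ⊗ₜ[K] g2 i →
      φ (a ⊗ₜ[K] L) = ∑ i, act (g1 i) a ⊗ₜ[K] (g2 i * L))
    (hψ : ∀ (a : A) (L : H) (n : ℕ) (f1 f2 : Fin n → H),
      F = ∑ i, f1 i ⊗ₜ[K] f2 i →
      ψ (a ⊗ₜ[K] L) = ∑ i, act (f1 i) a ⊗ₜ[K] (f2 i * L)) :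
    -- φ is an algebra isomorphism with inverse ψ
    (∀ x y : A ⊗[K] H, φ (mF x y) = m (φ x) (φ y)) ∧
    φ ((1 : A) ⊗ₜ[K] (1 : H)) = (1 : A) ⊗ₜ[K] (1 : H) ∧
    (∀ x : A ⊗[K] H, ψ (φ x) = x) ∧
    (∀ x : A ⊗[K] H, φ (ψ x) = x) := by
  obtain ⟨ρ, rfl⟩ : ∃ ρ : H →ₐ[K] Module.End K A, ρ.toLinearMap = act :=
    ⟨AlgHom.ofLinearMap act (LinearMap.ext hact_one) fun L J => LinearMap.ext (hact_mul L J), rfl⟩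
  have hρ (u : H) (a b : A) :
      ρ u (a * b) = LinearMap.mul' K A (tensorAction ρ ρ (Coalgebra.comul (R := K) u) (a ⊗ₜ b)) :=
    eq_of_forall_fin_sum_tmul _ (LinearMap.mul' K A ∘ₗ LinearMap.applyₗ (a ⊗ₜ b) ∘ₗ
        (tensorAction ρ ρ).toLinearMap)
      fun n L1 L2 h => (hact_alg u a b n L1 L2 h).trans (by simp)
  obtain rfl := eq_smashAction_of_fin_sum ρ φ Finv hφ
  obtain rfl := eq_smashAction_of_fin_sum ρ ψ F hψ
  refine ⟨smashAction_map_twistedSmashMul ρ hinv₁ hinv₂ hcoc hρ m mF (smashMul_tmul_of_fin_sum ρ m hm)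
      (twistedSmashMul_tmul_of_fin_sum ρ F Finv mF hmF), ?_, fun x => ?_, fun x => ?_⟩
  · rw [smashAction_one_tmul_one ρ hact_unit, ctL_inv hinv₁ hnorm₁]
  · rw [← Module.End.mul_apply, ← map_mul, hinv₁, map_one, Module.End.one_apply]
  · rw [← Module.End.mul_apply, ← map_mul, hinv₂, map_one, Module.End.one_apply]

/-- `φ(a ⋊ L) = (F̄₁ ▷ a) ⋊ F̄₂L` is an algebra isomorphism
`A_F ⋊ H^F → A ⋊ H`, with inverse `ψ(a ⋊ L) = (F₁ ▷ a) ⋊ F₂L`. -/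
theorem twisted_smash_product_isomorphism
    {K H A : Type} [CommRing K] [Ring H] [Bialgebra K H] [Ring A] [Algebra K A]
    (act : H →ₗ[K] A →ₗ[K] A)
    (hact_one : ∀ a : A, act 1 a = a)
    (hact_mul : ∀ (L J : H) (a : A), act (L * J) a = act L (act J a))
    (hact_unit : ∀ L : H, act L (1 : A) = Coalgebra.counit (R := K) L • (1 : A))
    (hact_alg : ∀ (L : H) (a b : A) (n : ℕ) (L1 L2 : Fin n → H),
      Coalgebra.comul (R := K) L = ∑ i, L1 i ⊗ₜ[K] L2 i →
      act L (a * b) = ∑ i, act (L1 i) a * act (L2 i) b)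
    -- F is a normalized cocycle twist
    (F Finv : H ⊗[K] H)
    (hinv₁ : F * Finv = 1) (hinv₂ : Finv * F = 1)
    (hcoc : leg12 K H F * copL K H F = leg23 K H F * copR K H F)
    (hnorm₁ : ctL K H F = 1) (hnorm₂ : ctR K H F = 1)
    -- the smash product multiplication of A ⋊ H
    (m : (A ⊗[K] H) →ₗ[K] (A ⊗[K] H) →ₗ[K] (A ⊗[K] H))
    (hm : ∀ (a b : A) (L J : H) (n : ℕ) (L1 L2 : Fin n → H),
      Coalgebra.comul (R := K) L = ∑ i, L1 i ⊗ₜ[K] L2 i →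
      m (a ⊗ₜ[K] L) (b ⊗ₜ[K] J) = ∑ i, (a * act (L1 i) b) ⊗ₜ[K] (L2 i * J))
    -- the smash product multiplication of A_F ⋊ H^F
    (mF : (A ⊗[K] H) →ₗ[K] (A ⊗[K] H) →ₗ[K] (A ⊗[K] H))
    (hmF : ∀ (a b : A) (L J : H) (n : ℕ) (L1 L2 : Fin n → H),
      F * Coalgebra.comul (R := K) L * Finv = ∑ i, L1 i ⊗ₜ[K] L2 i →
      mF (a ⊗ₜ[K] L) (b ⊗ₜ[K] J) =
        ∑ i, starF act Finv a (act (L1 i) b) ⊗ₜ[K] (L2 i * J))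
    -- the maps φ and ψ
    (φ ψ : A ⊗[K] H →ₗ[K] A ⊗[K] H)
    (hφ : ∀ (a : A) (L : H) (n : ℕ) (g1 g2 : Fin n → H),
      Finv = ∑ i, g1 i ⊗ₜ[K] g2 i →
      φ (a ⊗ₜ[K] L) = ∑ i, act (g1 i) a ⊗ₜ[K] (g2 i * L))
    (hψ : ∀ (a : A) (L : H) (n : ℕ) (f1 f2 : Fin n → H),
      F = ∑ i, f1 i ⊗ₜ[K] f2 i →
      ψ (a ⊗ₜ[K] L) = ∑ i, act (f1 i) a ⊗ₜ[K] (f2 i * L)) :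
    -- φ is an algebra isomorphism with inverse ψ
    (∀ x y : A ⊗[K] H, φ (mF x y) = m (φ x) (φ y)) ∧
    φ ((1 : A) ⊗ₜ[K] (1 : H)) = (1 : A) ⊗ₜ[K] (1 : H) ∧
    (∀ x : A ⊗[K] H, ψ (φ x) = x) ∧
    (∀ x : A ⊗[K] H, φ (ψ x) = x) :=
  twisted_smash_product_isomorphism_general act hact_one hact_mul hact_unit hact_alg F Finv hinv₁
    hinv₂ hcoc hnorm₁ m hm mF hmF φ ψ hφ hψ
end

section
/- Let A be a commutative left H-module algebra over a bialgebra H and F a normalized cocycle twist. Then the twisted star product a ⋆_F b = (F̄₁ ▷ a)·(F̄₂ ▷ b) is braided commutative with respect to the triangular R-matrix R = F₂₁F⁻¹: namely (R₂ ▷ b) ⋆_F (R₁ ▷ a) = a ⋆_F b for all a, b ∈ A. -/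
/-! Acting on the arguments of a star product can be absorbed into the twist:
`(x ▷ a) ⋆_G (y ▷ b)` is `a ⋆ b` computed with `G (x ⊗ y)`. Hence the left side is `b ⋆ a` with twist
`F⁻¹ R₂₁ = F⁻¹ F (F⁻¹)₂₁ = (F⁻¹)₂₁`, and in a commutative algebra flipping the twist swaps the
arguments back. -/

open TensorProduct

theorem TensorProduct.comm_mul {R A B : Type*} [CommSemiring R] [Semiring A] [Semiring B]
    [Algebra R A] [Algebra R B] (u v : A ⊗[R] B) :
    TensorProduct.comm R A B (u * v) = TensorProduct.comm R A B u * TensorProduct.comm R A B v :=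
  map_mul (Algebra.TensorProduct.comm R A B) u v

section StarProduct

variable {K H A : Type} [CommRing K] [Ring H] [Bialgebra K H]

theorem starF_sum [Ring A] [Algebra K A] (act : H →ₗ[K] A →ₗ[K] A) {ι : Type*}
    (s : Finset ι) (G : ι → H ⊗[K] H) (a b : A) :
    starF act (∑ i ∈ s, G i) a b = ∑ i ∈ s, starF act (G i) a b := by
  simp only [starF, map_sum]

theorem starF_act_act [Ring A] [Algebra K A] (act : H →ₗ[K] A →ₗ[K] A)
    (hact_mul : ∀ (L J : H) (a : A), act (L * J) a = act L (act J a))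
    (G : H ⊗[K] H) (x y : H) (a b : A) :
    starF act G (act x a) (act y b) = starF act (G * (x ⊗ₜ[K] y)) a b := by
  induction G using TensorProduct.induction_on with
  | zero => simp [starF]
  | tmul u v => simp [starF, Algebra.TensorProduct.tmul_mul_tmul, hact_mul]
  | add p q hp hq => simp only [starF, add_mul, map_add] at hp hq ⊢; rw [hp, hq]

theorem starF_comm [CommRing A] [Algebra K A] (act : H →ₗ[K] A →ₗ[K] A)
    (G : H ⊗[K] H) (a b : A) :
    starF act (TensorProduct.comm K H H G) b a = starF act G a b := by
  induction G using TensorProduct.induction_on with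
  | zero => simp [starF]
  | tmul u v => simp [starF, mul_comm]
  | add p q hp hq => simp only [starF, map_add] at hp hq ⊢; rw [hp, hq]

end StarProduct

theorem star_product_braided_commutative_general
    {K H A : Type} [CommRing K] [Ring H] [Bialgebra K H] [CommRing A] [Algebra K A]
    (act : H →ₗ[K] A →ₗ[K] A)
    (hact_mul : ∀ (L J : H) (a : A), act (L * J) a = act L (act J a))
    -- F is a normalized cocycle twist
    (F Finv : H ⊗[K] H)
    (hinv₂ : Finv * F = 1) :
    ∀ (a b : A) (n : ℕ) (r1 r2 : Fin n → H),
      TensorProduct.comm K H H F * Finv = ∑ i, r1 i ⊗ₜ[K] r2 i →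
      ∑ i, starF act Finv (act (r2 i) b) (act (r1 i) a) = starF act Finv a b := by
  intro a b n r1 r2 hR
  have hR₂₁ : ∑ i, r2 i ⊗ₜ[K] r1 i = F * TensorProduct.comm K H H Finv := by
    have := congrArg (TensorProduct.comm K H H) hR
    simpa [TensorProduct.comm_mul, map_sum] using this.symm
  calc ∑ i, starF act Finv (act (r2 i) b) (act (r1 i) a)
      = starF act (Finv * ∑ i, r2 i ⊗ₜ[K] r1 i) b a := by
        simp only [starF_act_act act hact_mul, Finset.mul_sum, starF_sum]
    _ = starF act (TensorProduct.comm K H H Finv) b a := by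
        rw [hR₂₁, ← mul_assoc, hinv₂, one_mul]
    _ = starF act Finv a b := starF_comm act Finv a b

/-- for a commutative module algebra `A`, the twisted star product
`⋆_F` is braided commutative w.r.t. the triangular R-matrix `R = F₂₁ F⁻¹`:
`(R₂ ▷ b) ⋆_F (R₁ ▷ a) = a ⋆_F b`. -/
theorem star_product_braided_commutative
    {K H A : Type} [CommRing K] [Ring H] [Bialgebra K H] [CommRing A] [Algebra K A]
    (act : H →ₗ[K] A →ₗ[K] A)
    (hact_one : ∀ a : A, act 1 a = a)
    (hact_mul : ∀ (L J : H) (a : A), act (L * J) a = act L (act J a))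
    (hact_unit : ∀ L : H, act L (1 : A) = Coalgebra.counit (R := K) L • (1 : A))
    (hact_alg : ∀ (L : H) (a b : A) (n : ℕ) (L1 L2 : Fin n → H),
      Coalgebra.comul (R := K) L = ∑ i, L1 i ⊗ₜ[K] L2 i →
      act L (a * b) = ∑ i, act (L1 i) a * act (L2 i) b)
    -- F is a normalized cocycle twist
    (F Finv : H ⊗[K] H)
    (hinv₁ : F * Finv = 1) (hinv₂ : Finv * F = 1)
    (hcoc : leg12 K H F * copL K H F = leg23 K H F * copR K H F)
    (hnorm₁ : ctL K H F = 1) (hnorm₂ : ctR K H F = 1) :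
    ∀ (a b : A) (n : ℕ) (r1 r2 : Fin n → H),
      TensorProduct.comm K H H F * Finv = ∑ i, r1 i ⊗ₜ[K] r2 i →
      ∑ i, starF act Finv (act (r2 i) b) (act (r1 i) a) = starF act Finv a b :=
  star_product_braided_commutative_general act hact_mul F Finv hinv₂
end

section
/- Let (H,R) be quasi-triangular and A braided commutative over (H,R). In the smash product bialgebroid A⋊H, for every a ∈ A and every L ∈ H, the coproduct Δ̃(a⋊L) = (a⋊L₍₁₎)⊗_A(1_A⋊L₍₂₎) takes values in the Takeuchi product, i.e. for all b ∈ A, ((a⋊L₍₁₎)t(b))⊗_A(1_A⋊L₍₂₎) = (a⋊L₍₁₎)⊗_A((1_A⋊L₍₂₎)s(b)). -/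
open TensorProduct

section AuxiliaryForTakeuchi

lemma tp_exists_fin {K M N : Type} [CommRing K] [AddCommGroup M] [AddCommGroup N]
    [Module K M] [Module K N] (x : M ⊗[K] N) :
    ∃ (n : ℕ) (f : Fin n → M) (g : Fin n → N), x = ∑ i, f i ⊗ₜ[K] g i := by
  obtain ⟨S, hS⟩ := TensorProduct.exists_finset x
  refine ⟨S.card, fun i => (S.equivFin.symm i).1.1, fun i => (S.equivFin.symm i).1.2, ?_⟩
  rw [hS, ← Finset.sum_attach S (fun i => i.1 ⊗ₜ[K] i.2)]
  exact (Equiv.sum_comp S.equivFin.symm (fun x : {x // x ∈ S} => x.1.1 ⊗ₜ[K] x.1.2)).symm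

lemma comm_mul' {K H : Type} [CommRing K] [Ring H] [Algebra K H] (x y : H ⊗[K] H) :
    TensorProduct.comm K H H (x * y) =
      TensorProduct.comm K H H x * TensorProduct.comm K H H y := by
  induction x using TensorProduct.induction_on with
  | zero => simp
  | tmul h1 h2 =>
    induction y using TensorProduct.induction_on with
    | zero => simp
    | tmul g1 g2 => simp [Algebra.TensorProduct.tmul_mul_tmul]
    | add y1 y2 hy1 hy2 => simp [mul_add, hy1, hy2]
  | add x1 x2 h1 h2 => simp [add_mul, h1, h2]

lemma comm_comm' {K H : Type} [CommRing K] [Ring H] [Algebra K H] (x : H ⊗[K] H) :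
    TensorProduct.comm K H H (TensorProduct.comm K H H x) = x := by
  induction x using TensorProduct.induction_on with
  | zero => simp
  | tmul h1 h2 => simp
  | add x1 x2 h1 h2 => simp [h1, h2]

variable {K H A : Type} [CommRing K] [Ring H] [Bialgebra K H] [Ring A] [Algebra K A]

/-- The elementwise form of the smash multiplication:
`Fm act a b J (h₁ ⊗ h₂) = (a * (h₁ ▷ b)) ⊗ (h₂ * J)`. -/
noncomputable def Fm (act : H →ₗ[K] A →ₗ[K] A) (a b : A) (J : H) :
    H ⊗[K] H →ₗ[K] A ⊗[K] H :=
  TensorProduct.map (LinearMap.mulLeft K a ∘ₗ act.flip b) (LinearMap.mulRight K J)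

@[simp] lemma Fm_tmul (act : H →ₗ[K] A →ₗ[K] A) (a b : A) (J h1 h2 : H) :
    Fm act a b J (h1 ⊗ₜ[K] h2) = (a * act h1 b) ⊗ₜ[K] (h2 * J) := by
  simp [Fm]

/-- `Phi1 act c a u ((h₁ ⊗ h₂) ⊗ g) = ((g ▷ c) * (h₁ ▷ a)) ⊗ (h₂ * u)`. -/
noncomputable def Phi1 (act : H →ₗ[K] A →ₗ[K] A) (c a : A) (u : H) :
    (H ⊗[K] H) ⊗[K] H →ₗ[K] A ⊗[K] H :=
  TensorProduct.map (LinearMap.mul' K A) LinearMap.id ∘ₗ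
    (TensorProduct.assoc K A A H).symm.toLinearMap ∘ₗ
    (TensorProduct.comm K (A ⊗[K] H) A).toLinearMap ∘ₗ
    TensorProduct.map (TensorProduct.map (act.flip a) (LinearMap.mulRight K u)) (act.flip c)

@[simp] lemma Phi1_tmul (act : H →ₗ[K] A →ₗ[K] A) (c a : A) (u h1 h2 g : H) :
    Phi1 act c a u ((h1 ⊗ₜ[K] h2) ⊗ₜ[K] g) = (act g c * act h1 a) ⊗ₜ[K] (h2 * u) := by
  simp [Phi1]

lemma Phi1_tmul' (act : H →ₗ[K] A →ₗ[K] A) (c a : A) (u g : H) (w : H ⊗[K] H) :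
    Phi1 act c a u (w ⊗ₜ[K] g) = Fm act (act g c) a u w := by
  induction w using TensorProduct.induction_on with
  | zero => simp
  | tmul h1 h2 => simp
  | add w1 w2 h1 h2 => rw [add_tmul, map_add, h1, h2, map_add]

variable {K H A : Type} [CommRing K] [Ring H] [Bialgebra K H] [Ring A] [Algebra K A]

/-- The map `u ⊗ w ↦ Fm(comm R * comm u) ⊗ (1 ⊗ w)`. -/
noncomputable def Theta2 (act : H →ₗ[K] A →ₗ[K] A) (a b : A) (R : H ⊗[K] H) :
    (H ⊗[K] H) ⊗[K] H →ₗ[K] (A ⊗[K] H) ⊗[K] (A ⊗[K] H) :=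
  TensorProduct.map
    (Fm act a b 1 ∘ₗ LinearMap.mulLeft K (TensorProduct.comm K H H R) ∘ₗ
      (TensorProduct.comm K H H).toLinearMap)
    (TensorProduct.mk K A H 1)

@[simp] lemma Theta2_tmul (act : H →ₗ[K] A →ₗ[K] A) (a b : A) (R u : H ⊗[K] H) (w : H) :
    Theta2 act a b R (u ⊗ₜ[K] w) =
      (Fm act a b 1 (TensorProduct.comm K H H R * TensorProduct.comm K H H u))
        ⊗ₜ[K] ((1 : A) ⊗ₜ[K] w) := by
  simp [Theta2]

/-- The map `u ⊗ (v ⊗ w) ↦ (a ⊗ u) ⊗ ((v ▷ b) ⊗ w)`. -/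
noncomputable def ThetaY (act : H →ₗ[K] A →ₗ[K] A) (a b : A) :
    H ⊗[K] (H ⊗[K] H) →ₗ[K] (A ⊗[K] H) ⊗[K] (A ⊗[K] H) :=
  TensorProduct.map (TensorProduct.mk K A H a)
    (TensorProduct.map (act.flip b) LinearMap.id)

@[simp] lemma ThetaY_tmul (act : H →ₗ[K] A →ₗ[K] A) (a b : A) (u : H) (t : H ⊗[K] H) :
    ThetaY act a b (u ⊗ₜ[K] t) =
      (a ⊗ₜ[K] u) ⊗ₜ[K] (TensorProduct.map (act.flip b) LinearMap.id t) := by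
  simp [ThetaY]

end AuxiliaryForTakeuchi


/-- the coproduct `Δ̃(a ⋊ L) = (a ⋊ L₍₁₎) ⊗_A (1 ⋊ L₍₂₎)` of the
smash product bialgebroid takes values in the Takeuchi product: in
`M ⊗_A M = (M ⊗ M)/⟨(t(b)x) ⊗ y - x ⊗ (s(b)y)⟩` one has
`((a ⋊ L₍₁₎)t(b)) ⊗_A (1 ⋊ L₍₂₎) = (a ⋊ L₍₁₎) ⊗_A ((1 ⋊ L₍₂₎)s(b))`. -/
theorem smash_coproduct_lands_in_takeuchi
    {K H A : Type} [CommRing K] [Ring H] [Bialgebra K H] [Ring A] [Algebra K A]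
    (act : H →ₗ[K] A →ₗ[K] A)
    (hact_one : ∀ a : A, act 1 a = a)
    (hact_mul : ∀ (L J : H) (a : A), act (L * J) a = act L (act J a))
    (hact_unit : ∀ L : H, act L (1 : A) = Coalgebra.counit (R := K) L • (1 : A))
    (hact_alg : ∀ (L : H) (a b : A) (n : ℕ) (L1 L2 : Fin n → H),
      Coalgebra.comul (R := K) L = ∑ i, L1 i ⊗ₜ[K] L2 i →
      act L (a * b) = ∑ i, act (L1 i) a * act (L2 i) b)
    -- quasi-triangularity of (H, R)
    (R Rinv : H ⊗[K] H)
    (hR₁ : R * Rinv = 1) (hR₂ : Rinv * R = 1)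
    (hRΔ : ∀ x : H,
      R * Coalgebra.comul (R := K) x * Rinv =
        TensorProduct.comm K H H (Coalgebra.comul (R := K) x))
    (hhex₁ : copL K H R = leg13 K H R * leg23 K H R)
    (hhex₂ : copR K H R = leg13 K H R * leg12 K H R)
    (hRn₁ : ctL K H R = 1) (hRn₂ : ctR K H R = 1)
    -- A is braided commutative w.r.t. R
    (hbr : ∀ (a b : A) (n : ℕ) (r1 r2 : Fin n → H),
      R = ∑ i, r1 i ⊗ₜ[K] r2 i → a * b = ∑ i, act (r2 i) b * act (r1 i) a)
    -- the smash product multiplication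
    (m : (A ⊗[K] H) →ₗ[K] (A ⊗[K] H) →ₗ[K] (A ⊗[K] H))
    (hm : ∀ (a b : A) (L J : H) (n : ℕ) (L1 L2 : Fin n → H),
      Coalgebra.comul (R := K) L = ∑ i, L1 i ⊗ₜ[K] L2 i →
      m (a ⊗ₜ[K] L) (b ⊗ₜ[K] J) = ∑ i, (a * act (L1 i) b) ⊗ₜ[K] (L2 i * J))
    -- the submodule defining M ⊗_A M, with t(b) = (R₂ ▷ b) ⋊ R₁, s(b) = b ⋊ 1
    (I : Submodule K ((A ⊗[K] H) ⊗[K] (A ⊗[K] H)))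
    (hI : I = Submodule.span K
      {z : (A ⊗[K] H) ⊗[K] (A ⊗[K] H) |
        ∃ (b : A) (x y : A ⊗[K] H),
          z = (m (tmap act b R) x) ⊗ₜ[K] y - x ⊗ₜ[K] (m (b ⊗ₜ[K] (1 : H)) y)}) :
    ∀ (a b : A) (L : H) (n : ℕ) (L1 L2 : Fin n → H),
      Coalgebra.comul (R := K) L = ∑ i, L1 i ⊗ₜ[K] L2 i →
      I.mkQ (∑ i, (m (a ⊗ₜ[K] L1 i) (tmap act b R)) ⊗ₜ[K] ((1 : A) ⊗ₜ[K] L2 i)) =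
        I.mkQ (∑ i, (a ⊗ₜ[K] L1 i) ⊗ₜ[K]
          (m ((1 : A) ⊗ₜ[K] L2 i) (b ⊗ₜ[K] (1 : H)))) := by
  intro a b L n L1 L2 hL
  classical
  -- a finite representation of R
  obtain ⟨N, r1, r2, hR⟩ := tp_exists_fin R
  have hcommR : TensorProduct.comm K H H R = ∑ p, r2 p ⊗ₜ[K] r1 p := by
    rw [hR, map_sum]; simp
  -- elementwise formula for m
  have hm' : ∀ (a' b' : A) (L' J : H),
      m (a' ⊗ₜ[K] L') (b' ⊗ₜ[K] J) = Fm act a' b' J (Coalgebra.comul (R := K) L') := by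
    intro a' b' L' J
    obtain ⟨N', f, g, hfg⟩ := tp_exists_fin (Coalgebra.comul (R := K) L')
    rw [hm a' b' L' J N' f g hfg, hfg, map_sum]
    simp
  -- tmap on the representation
  have htm : ∀ c : A, tmap act c R = ∑ p, act (r2 p) c ⊗ₜ[K] r1 p := by
    intro c
    rw [tmap, hR, map_sum, map_sum]
    simp
  -- multiplying by s(c) on the left
  have hms : ∀ (c : A) (w : H), m (c ⊗ₜ[K] (1 : H)) ((1 : A) ⊗ₜ[K] w) = c ⊗ₜ[K] w := by
    intro c w
    rw [hm c 1 1 w 1 (fun _ => 1) (fun _ => 1) (by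
      rw [Bialgebra.comul_one]; simp [Algebra.TensorProduct.one_def])]
    simp [hact_one]
  -- hexagon consequence
  have hΔr : (∑ p, Coalgebra.comul (R := K) (r1 p) ⊗ₜ[K] r2 p)
      = ∑ p, ∑ q, ((r1 p ⊗ₜ[K] r1 q) ⊗ₜ[K] (r2 p * r2 q)) := by
    have e1 : (TensorProduct.assoc K H H H).symm (copL K H R)
        = ∑ p, Coalgebra.comul (R := K) (r1 p) ⊗ₜ[K] r2 p := by
      rw [copL]
      simp only [LinearMap.coe_comp, LinearEquiv.coe_coe, Function.comp_apply,
        LinearEquiv.symm_apply_apply]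
      rw [hR, map_sum]
      simp
    have e2 : (TensorProduct.assoc K H H H).symm ((leg13 K H R) * (leg23 K H R))
        = ∑ p, ∑ q, ((r1 p ⊗ₜ[K] r1 q) ⊗ₜ[K] (r2 p * r2 q)) := by
      have l13 : leg13 K H R = ∑ p, r1 p ⊗ₜ[K] ((1 : H) ⊗ₜ[K] r2 p) := by
        rw [hR, map_sum]; simp [leg13]
      have l23 : leg23 K H R = ∑ q, (1 : H) ⊗ₜ[K] (r1 q ⊗ₜ[K] r2 q) := by
        rw [hR, map_sum]; simp [leg23]
      rw [l13, l23, Finset.sum_mul_sum, map_sum]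
      refine Finset.sum_congr rfl fun p _ => ?_
      rw [map_sum]
      refine Finset.sum_congr rfl fun q _ => ?_
      rw [Algebra.TensorProduct.tmul_mul_tmul, Algebra.TensorProduct.tmul_mul_tmul]
      simp
    rw [← e1, ← e2, hhex₁]
  -- P1 : multiplying (a ⋊ u) by t(c) on the left
  have P1 : ∀ (c : A) (u : H), m (tmap act c R) (a ⊗ₜ[K] u)
      = ∑ q, (a * act (r2 q) c) ⊗ₜ[K] (r1 q * u) := by
    intro c u
    rw [htm c, map_sum]
    simp only [LinearMap.sum_apply]
    calc ∑ p, m (act (r2 p) c ⊗ₜ[K] r1 p) (a ⊗ₜ[K] u)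
        = ∑ p, Fm act (act (r2 p) c) a u (Coalgebra.comul (R := K) (r1 p)) :=
          Finset.sum_congr rfl fun p _ => hm' _ _ _ _
      _ = ∑ p, Phi1 act c a u (Coalgebra.comul (R := K) (r1 p) ⊗ₜ[K] r2 p) :=
          Finset.sum_congr rfl fun p _ => (Phi1_tmul' act c a u (r2 p) _).symm
      _ = Phi1 act c a u (∑ p, Coalgebra.comul (R := K) (r1 p) ⊗ₜ[K] r2 p) :=
          (map_sum _ _ _).symm
      _ = ∑ p, ∑ q, (act (r2 p * r2 q) c * act (r1 p) a) ⊗ₜ[K] (r1 q * u) := by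
          rw [hΔr, map_sum]
          refine Finset.sum_congr rfl fun p _ => ?_
          rw [map_sum]
          exact Finset.sum_congr rfl fun q _ => Phi1_tmul act c a u _ _ _
      _ = ∑ q, ∑ p, (act (r2 p) (act (r2 q) c) * act (r1 p) a) ⊗ₜ[K] (r1 q * u) := by
          rw [Finset.sum_comm]
          exact Finset.sum_congr rfl fun q _ => Finset.sum_congr rfl fun p _ => by
            rw [hact_mul]
      _ = ∑ q, (∑ p, act (r2 p) (act (r2 q) c) * act (r1 p) a) ⊗ₜ[K] (r1 q * u) :=
          Finset.sum_congr rfl fun q _ => (TensorProduct.sum_tmul _ _ _).symm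
      _ = ∑ q, (a * act (r2 q) c) ⊗ₜ[K] (r1 q * u) :=
          Finset.sum_congr rfl fun q _ => by
            rw [← hbr a (act (r2 q) c) N r1 r2 hR]
  -- P2 : multiplying (a ⋊ L') by t(b) on the right
  have P2 : ∀ L' : H, m (a ⊗ₜ[K] L') (tmap act b R)
      = Fm act a b 1 (Coalgebra.comul (R := K) L' * TensorProduct.comm K H H R) := by
    intro L'
    obtain ⟨M', P, Q, hPQ⟩ := tp_exists_fin (Coalgebra.comul (R := K) L')
    rw [htm b, map_sum]
    calc ∑ p, m (a ⊗ₜ[K] L') (act (r2 p) b ⊗ₜ[K] r1 p)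
        = ∑ p, Fm act a (act (r2 p) b) (r1 p) (Coalgebra.comul (R := K) L') :=
          Finset.sum_congr rfl fun p _ => hm' _ _ _ _
      _ = ∑ p, ∑ k, (a * act (P k) (act (r2 p) b)) ⊗ₜ[K] (Q k * r1 p) := by
          refine Finset.sum_congr rfl fun p _ => ?_
          rw [hPQ, map_sum]
          simp
      _ = Fm act a b 1 (Coalgebra.comul (R := K) L' * TensorProduct.comm K H H R) := by
          rw [hPQ, hcommR, Finset.sum_mul_sum, map_sum, Finset.sum_comm]
          refine Finset.sum_congr rfl fun p _ => ?_
          rw [map_sum]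
          refine Finset.sum_congr rfl fun k _ => ?_
          rw [Algebra.TensorProduct.tmul_mul_tmul, Fm_tmul, hact_mul, mul_one]
  -- the R-matrix flip identity
  have hflip : ∀ x : H,
      Coalgebra.comul (R := K) x * TensorProduct.comm K H H R
        = TensorProduct.comm K H H R
            * TensorProduct.comm K H H (Coalgebra.comul (R := K) x) := by
    intro x
    have h1 : R * Coalgebra.comul (R := K) x
        = TensorProduct.comm K H H (Coalgebra.comul (R := K) x) * R := by
      calc R * Coalgebra.comul (R := K) x
          = R * Coalgebra.comul (R := K) x * (Rinv * R) := by rw [hR₂, mul_one]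
        _ = (R * Coalgebra.comul (R := K) x * Rinv) * R := (mul_assoc _ Rinv R).symm
        _ = _ := by rw [hRΔ]
    have h2 := congrArg (TensorProduct.comm K H H) h1
    rw [comm_mul', comm_mul', comm_comm'] at h2
    exact h2.symm
  -- coassociativity
  have hco : ∑ i, L1 i ⊗ₜ[K] Coalgebra.comul (R := K) (L2 i)
      = TensorProduct.assoc K H H H
          (∑ i, Coalgebra.comul (R := K) (L1 i) ⊗ₜ[K] L2 i) := by
    have h := Coalgebra.coassoc_apply (R := K) L
    rw [hL] at h
    simp only [map_sum, LinearMap.rTensor_tmul, LinearMap.lTensor_tmul] at h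
    rw [← map_sum] at h
    exact h.symm
  -- X and Y in terms of Theta2 and ThetaY
  have hX : (∑ i, (m (a ⊗ₜ[K] L1 i) (tmap act b R)) ⊗ₜ[K] ((1 : A) ⊗ₜ[K] L2 i))
      = Theta2 act a b R (∑ i, Coalgebra.comul (R := K) (L1 i) ⊗ₜ[K] L2 i) := by
    rw [map_sum]
    refine Finset.sum_congr rfl fun i _ => ?_
    rw [Theta2_tmul, P2 (L1 i), hflip (L1 i)]
  have hY : (∑ i, (a ⊗ₜ[K] L1 i) ⊗ₜ[K] m ((1 : A) ⊗ₜ[K] L2 i) (b ⊗ₜ[K] (1 : H)))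
      = ThetaY act a b (∑ i, L1 i ⊗ₜ[K] Coalgebra.comul (R := K) (L2 i)) := by
    rw [map_sum]
    refine Finset.sum_congr rfl fun i _ => ?_
    rw [ThetaY_tmul, hm' 1 b (L2 i) 1]
    have hFm1 : Fm act (1 : A) b (1 : H) = TensorProduct.map (act.flip b) LinearMap.id := by
      rw [Fm, LinearMap.mulLeft_one, LinearMap.mulRight_one, LinearMap.id_comp]
    rw [hFm1]
  -- the key membership
  have key : ∀ w : H ⊗[K] (H ⊗[K] H),
      Theta2 act a b R ((TensorProduct.assoc K H H H).symm w) - ThetaY act a b w ∈ I := by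
    intro w
    induction w using TensorProduct.induction_on with
    | zero => simpa using I.zero_mem
    | tmul u t =>
      induction t using TensorProduct.induction_on with
      | zero => simpa using I.zero_mem
      | tmul v w' =>
        rw [TensorProduct.assoc_symm_tmul, Theta2_tmul, ThetaY_tmul,
          TensorProduct.comm_tmul, TensorProduct.map_tmul]
        have h1 : Fm act a b 1 (TensorProduct.comm K H H R * (v ⊗ₜ[K] u))
            = m (tmap act (act v b) R) (a ⊗ₜ[K] u) := by
          rw [P1 (act v b) u, hcommR, Finset.sum_mul, map_sum]
          refine Finset.sum_congr rfl fun p _ => ?_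
          rw [Algebra.TensorProduct.tmul_mul_tmul, Fm_tmul, hact_mul, mul_one]
        simp only [LinearMap.flip_apply, LinearMap.id_coe, id_eq]
        rw [h1, ← hms (act v b) w', hI]
        exact Submodule.subset_span ⟨act v b, a ⊗ₜ[K] u, (1 : A) ⊗ₜ[K] w', rfl⟩
      | add t1 t2 h1 h2 =>
        rw [tmul_add, map_add, map_add, map_add, add_sub_add_comm]
        exact I.add_mem h1 h2
    | add w1 w2 h1 h2 =>
      rw [map_add, map_add, map_add, add_sub_add_comm]
      exact I.add_mem h1 h2
  -- conclusion
  rw [Submodule.mkQ_apply, Submodule.mkQ_apply, Submodule.Quotient.eq, hX, hY]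
  have hw0 : (∑ i, Coalgebra.comul (R := K) (L1 i) ⊗ₜ[K] L2 i)
      = (TensorProduct.assoc K H H H).symm
          (∑ i, L1 i ⊗ₜ[K] Coalgebra.comul (R := K) (L2 i)) := by
    rw [hco, LinearEquiv.symm_apply_apply]
  rw [hw0]
  exact key _
end

section
/- Let H be a bialgebra, A a left H-module algebra, and F a normalized cocycle twist. Then for generators of mixed type, φ((1_A⋊L)⋆_F(b⋊J)) = φ(1_A⋊L)⋆φ(b⋊J), where explicitly (1_A⋊L)⋆_F(b⋊J) = (F₁L₍₁₎F̄₁'▷b)⋊F₂L₍₂₎F̄₂'J in A_F⋊H^F and φ(a⋊L) = (F̄₁▷a)⋊F̄₂L. -/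
open TensorProduct

/-! Both sides have the form `(G₁ ▷ b) ⋊ G₂ J` for some `G ∈ H ⊗ H`, and a linear map sending
`a ⋊ L` to `(G'₁ ▷ a) ⋊ G'₂ L` turns the element given by `G` into the one given by `G' G`.
Normalization of `F` passes to `F̄`, so `1 ⋆_F c = c` and `φ(1 ⋊ L) = 1 ⋊ L`; hence the left side
is given by `F̄ · F Δ(L) F̄ = Δ(L) F̄`, and so is the right side. -/

namespace TensorProduct

variable {R M N M' N' : Type*} [CommSemiring R] [AddCommMonoid M] [AddCommMonoid N]
  [AddCommMonoid M'] [AddCommMonoid N'] [Module R M] [Module R N] [Module R M'] [Module R N']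

theorem eq_map_of_forall_eq_sum_tmul (f : M →ₗ[R] M') (g : N →ₗ[R] N') (x : M ⊗[R] N)
    (y : M' ⊗[R] N')
    (h : ∀ (n : ℕ) (x₁ : Fin n → M) (x₂ : Fin n → N),
      x = ∑ i, x₁ i ⊗ₜ[R] x₂ i → y = ∑ i, f (x₁ i) ⊗ₜ[R] g (x₂ i)) :
    y = map f g x := by
  obtain ⟨n, x₁, x₂, rfl⟩ := exists_sum_tmul_eq x
  simp [h n x₁ x₂ rfl]

end TensorProduct

section Counit

variable (K H : Type) [CommRing K] [Ring H] [Bialgebra K H]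

theorem ctL_eq_algHom (x : H ⊗[K] H) :
    ctL K H x = (Algebra.TensorProduct.lid K H).toAlgHom
      (Algebra.TensorProduct.map (Bialgebra.counitAlgHom K H) (AlgHom.id K H) x) := by
  induction x with
  | zero => simp
  | add x y hx hy => simp only [map_add, hx, hy]
  | tmul a b => simp [ctL]

variable {K H}

theorem ctL_eq_one_of_mul_eq_one {F G : H ⊗[K] H} (hF : ctL K H F = 1) (hFG : F * G = 1) :
    ctL K H G = 1 := by
  rw [ctL_eq_algHom] at hF ⊢
  simpa only [map_mul, map_one, hF, one_mul] using
    congrArg (fun x => (Algebra.TensorProduct.lid K H).toAlgHom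
      (Algebra.TensorProduct.map (Bialgebra.counitAlgHom K H) (AlgHom.id K H) x)) hFG

end Counit

section SmashProduct

variable {K H A : Type} [CommRing K] [Ring H] [Bialgebra K H] [Ring A] [Algebra K A]
  (act : H →ₗ[K] A →ₗ[K] A)

/-- `G ↦ (G₁ ▷ b) ⋊ G₂ J`. -/
noncomputable def actTensor (b : A) (J : H) : H ⊗[K] H →ₗ[K] A ⊗[K] H :=
  TensorProduct.map (act.flip b) (LinearMap.mulRight K J)

@[simp]
theorem actTensor_tmul (b : A) (J x₁ x₂ : H) :
    actTensor act b J (x₁ ⊗ₜ x₂) = act x₁ b ⊗ₜ (x₂ * J) :=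
  rfl

variable {act}

theorem actTensor_one_left (hact_unit : ∀ L : H, act L 1 = Coalgebra.counit (R := K) L • 1)
    (L : H) (G : H ⊗[K] H) :
    actTensor act 1 L G = 1 ⊗ₜ (ctL K H G * L) := by
  induction G with
  | zero => simp
  | add G G' hG hG' => simp [hG, hG', add_mul, tmul_add]
  | tmul g₁ g₂ => simp [ctL, hact_unit, smul_tmul]

theorem starF_one_left (hact_one : ∀ a : A, act 1 a = a)
    (hact_unit : ∀ L : H, act L 1 = Coalgebra.counit (R := K) L • 1)
    {Finv : H ⊗[K] H} (hFinv : ctL K H Finv = 1) (c : A) :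
    starF act Finv 1 c = c := by
  suffices h : ∀ G : H ⊗[K] H, starF act G 1 c = act (ctL K H G) c by
    rw [h, hFinv, hact_one]
  intro G
  induction G with
  | zero => simp [starF]
  | add G G' hG hG' => simp_all [starF]
  | tmul g₁ g₂ => simp [starF, ctL, hact_unit]

theorem actTensor_mul_tmul (hact_mul : ∀ (L J : H) (a : A), act (L * J) a = act L (act J a))
    (b : A) (J x₁ x₂ : H) (G : H ⊗[K] H) :
    actTensor act b J (G * x₁ ⊗ₜ x₂) = actTensor act (act x₁ b) (x₂ * J) G := by
  induction G with
  | zero => simp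
  | add G G' hG hG' => simp [hG, hG', add_mul]
  | tmul g₁ g₂ => simp [hact_mul, mul_assoc]

theorem map_actTensor_of_tmul (hact_mul : ∀ (L J : H) (a : A), act (L * J) a = act L (act J a))
    (ψ : A ⊗[K] H →ₗ[K] A ⊗[K] H) (G : H ⊗[K] H)
    (hψ : ∀ (a : A) (L : H), ψ (a ⊗ₜ L) = actTensor act a L G) (b : A) (J : H)
    (X : H ⊗[K] H) :
    ψ (actTensor act b J X) = actTensor act b J (G * X) := by
  induction X with
  | zero => simp
  | add X X' hX hX' => simp [hX, hX', mul_add]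
  | tmul x₁ x₂ => rw [actTensor_tmul, hψ, actTensor_mul_tmul hact_mul]

end SmashProduct

theorem twist_isomorphism_on_mixed_generators_general
    {K H A : Type} [CommRing K] [Ring H] [Bialgebra K H] [Ring A] [Algebra K A]
    (act : H →ₗ[K] A →ₗ[K] A)
    (hact_one : ∀ a : A, act 1 a = a)
    (hact_mul : ∀ (L J : H) (a : A), act (L * J) a = act L (act J a))
    (hact_unit : ∀ L : H, act L (1 : A) = Coalgebra.counit (R := K) L • (1 : A))
    -- F is a normalized cocycle twist
    (F Finv : H ⊗[K] H)
    (hinv₁ : F * Finv = 1) (hinv₂ : Finv * F = 1)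
    (hnorm₁ : ctL K H F = 1)
    -- the smash product multiplication of A ⋊ H
    (m : (A ⊗[K] H) →ₗ[K] (A ⊗[K] H) →ₗ[K] (A ⊗[K] H))
    (hm : ∀ (a b : A) (L J : H) (n : ℕ) (L1 L2 : Fin n → H),
      Coalgebra.comul (R := K) L = ∑ i, L1 i ⊗ₜ[K] L2 i →
      m (a ⊗ₜ[K] L) (b ⊗ₜ[K] J) = ∑ i, (a * act (L1 i) b) ⊗ₜ[K] (L2 i * J))
    -- the smash product multiplication of A_F ⋊ H^F
    (mF : (A ⊗[K] H) →ₗ[K] (A ⊗[K] H) →ₗ[K] (A ⊗[K] H))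
    (hmF : ∀ (a b : A) (L J : H) (n : ℕ) (L1 L2 : Fin n → H),
      F * Coalgebra.comul (R := K) L * Finv = ∑ i, L1 i ⊗ₜ[K] L2 i →
      mF (a ⊗ₜ[K] L) (b ⊗ₜ[K] J) =
        ∑ i, starF act Finv a (act (L1 i) b) ⊗ₜ[K] (L2 i * J))
    -- the map φ
    (φ : A ⊗[K] H →ₗ[K] A ⊗[K] H)
    (hφ : ∀ (a : A) (L : H) (n : ℕ) (g1 g2 : Fin n → H),
      Finv = ∑ i, g1 i ⊗ₜ[K] g2 i →
      φ (a ⊗ₜ[K] L) = ∑ i, act (g1 i) a ⊗ₜ[K] (g2 i * L)) :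
    ∀ (b : A) (L J : H),
      -- explicit form:  (1 ⋊ L) ⋆_F (b ⋊ J) = (F₁L₍₁₎F̄₁' ▷ b) ⋊ F₂L₍₂₎F̄₂'J
      mF ((1 : A) ⊗ₜ[K] L) (b ⊗ₜ[K] J) =
        (TensorProduct.map (act.flip b) (LinearMap.mulRight K J))
          (F * Coalgebra.comul (R := K) L * Finv) ∧
      -- φ intertwines the products on mixed generators
      φ (mF ((1 : A) ⊗ₜ[K] L) (b ⊗ₜ[K] J)) =
        m (φ ((1 : A) ⊗ₜ[K] L)) (φ (b ⊗ₜ[K] J)) := by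
  intro b L J
  have hFinv : ctL K H Finv = 1 := ctL_eq_one_of_mul_eq_one hnorm₁ hinv₁
  have hφ' : ∀ (a : A) (L : H), φ (a ⊗ₜ L) = actTensor act a L Finv := fun a L =>
    eq_map_of_forall_eq_sum_tmul _ _ _ _ (hφ a L)
  have hm' : ∀ (a : A) (J : H), m (1 ⊗ₜ L) (a ⊗ₜ J) = actTensor act a J (Coalgebra.comul L) :=
    fun a J => eq_map_of_forall_eq_sum_tmul _ _ _ _ fun n L1 L2 hL => by
      simpa only [one_mul, LinearMap.flip_apply, LinearMap.mulRight_apply] using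
        hm 1 a L J n L1 L2 hL
  have hmF' : mF (1 ⊗ₜ L) (b ⊗ₜ J) = actTensor act b J (F * Coalgebra.comul L * Finv) :=
    eq_map_of_forall_eq_sum_tmul _ _ _ _ fun n L1 L2 hL => by
      simpa only [starF_one_left hact_one hact_unit hFinv, LinearMap.flip_apply,
        LinearMap.mulRight_apply] using hmF 1 b L J n L1 L2 hL
  refine ⟨hmF', ?_⟩
  calc φ (mF (1 ⊗ₜ L) (b ⊗ₜ J))
      = actTensor act b J (Finv * (F * Coalgebra.comul L * Finv)) := by
        rw [hmF', map_actTensor_of_tmul hact_mul φ Finv hφ']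
    _ = actTensor act b J (Coalgebra.comul L * Finv) := by
        rw [← mul_assoc, ← mul_assoc, hinv₂, one_mul]
    _ = m (φ (1 ⊗ₜ L)) (φ (b ⊗ₜ J)) := by
        rw [hφ' 1, actTensor_one_left hact_unit, hFinv, one_mul, hφ' b,
          map_actTensor_of_tmul hact_mul _ _ hm']

/-- on mixed generators, `φ((1 ⋊ L) ⋆_F (b ⋊ J)) = φ(1 ⋊ L) ⋆ φ(b ⋊ J)`,
where explicitly `(1 ⋊ L) ⋆_F (b ⋊ J) = (F₁L₍₁₎F̄₁' ▷ b) ⋊ F₂L₍₂₎F̄₂'J`. -/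
theorem twist_isomorphism_on_mixed_generators
    {K H A : Type} [CommRing K] [Ring H] [Bialgebra K H] [Ring A] [Algebra K A]
    (act : H →ₗ[K] A →ₗ[K] A)
    (hact_one : ∀ a : A, act 1 a = a)
    (hact_mul : ∀ (L J : H) (a : A), act (L * J) a = act L (act J a))
    (hact_unit : ∀ L : H, act L (1 : A) = Coalgebra.counit (R := K) L • (1 : A))
    (hact_alg : ∀ (L : H) (a b : A) (n : ℕ) (L1 L2 : Fin n → H),
      Coalgebra.comul (R := K) L = ∑ i, L1 i ⊗ₜ[K] L2 i →
      act L (a * b) = ∑ i, act (L1 i) a * act (L2 i) b)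
    -- F is a normalized cocycle twist
    (F Finv : H ⊗[K] H)
    (hinv₁ : F * Finv = 1) (hinv₂ : Finv * F = 1)
    (hcoc : leg12 K H F * copL K H F = leg23 K H F * copR K H F)
    (hnorm₁ : ctL K H F = 1) (hnorm₂ : ctR K H F = 1)
    -- the smash product multiplication of A ⋊ H
    (m : (A ⊗[K] H) →ₗ[K] (A ⊗[K] H) →ₗ[K] (A ⊗[K] H))
    (hm : ∀ (a b : A) (L J : H) (n : ℕ) (L1 L2 : Fin n → H),
      Coalgebra.comul (R := K) L = ∑ i, L1 i ⊗ₜ[K] L2 i →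
      m (a ⊗ₜ[K] L) (b ⊗ₜ[K] J) = ∑ i, (a * act (L1 i) b) ⊗ₜ[K] (L2 i * J))
    -- the smash product multiplication of A_F ⋊ H^F
    (mF : (A ⊗[K] H) →ₗ[K] (A ⊗[K] H) →ₗ[K] (A ⊗[K] H))
    (hmF : ∀ (a b : A) (L J : H) (n : ℕ) (L1 L2 : Fin n → H),
      F * Coalgebra.comul (R := K) L * Finv = ∑ i, L1 i ⊗ₜ[K] L2 i →
      mF (a ⊗ₜ[K] L) (b ⊗ₜ[K] J) =
        ∑ i, starF act Finv a (act (L1 i) b) ⊗ₜ[K] (L2 i * J))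
    -- the map φ
    (φ : A ⊗[K] H →ₗ[K] A ⊗[K] H)
    (hφ : ∀ (a : A) (L : H) (n : ℕ) (g1 g2 : Fin n → H),
      Finv = ∑ i, g1 i ⊗ₜ[K] g2 i →
      φ (a ⊗ₜ[K] L) = ∑ i, act (g1 i) a ⊗ₜ[K] (g2 i * L)) :
    ∀ (b : A) (L J : H),
      -- explicit form:  (1 ⋊ L) ⋆_F (b ⋊ J) = (F₁L₍₁₎F̄₁' ▷ b) ⋊ F₂L₍₂₎F̄₂'J
      mF ((1 : A) ⊗ₜ[K] L) (b ⊗ₜ[K] J) =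
        (TensorProduct.map (act.flip b) (LinearMap.mulRight K J))
          (F * Coalgebra.comul (R := K) L * Finv) ∧
      -- φ intertwines the products on mixed generators
      φ (mF ((1 : A) ⊗ₜ[K] L) (b ⊗ₜ[K] J)) =
        m (φ ((1 : A) ⊗ₜ[K] L)) (φ (b ⊗ₜ[K] J)) :=
  twist_isomorphism_on_mixed_generators_general act hact_one hact_mul hact_unit F Finv hinv₁ hinv₂
    hnorm₁ m hm mF hmF φ hφ
end
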